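/- arXiv:math/0611776 — 6 statements merged into one kernel-verified Lean document; each statement's English description precedes it below -/
import Mathlib

section
/- Suppose that for each i, 1 ≤ i ≤ r, the multiset of parts of Π_i greater than 1 equals the multiset of parts of Π'_i greater than 1. Then n = n' and Π_i = Π'_i for all i, 1 ≤ i ≤ r. -/
/-- `P` is a partition of `n`: all parts are positive and they sum to `n`. -/
def IsPartitionOf (n : ℕ) (P : Multiset ℕ) : Prop :=
  P.sum = n ∧ ∀ a ∈ P, 1 ≤ a

lemma aux_decomp (n : ℕ) (P : Multiset ℕ) (h : IsPartitionOf n P) :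
    P = P.filter (fun a => 1 < a) +
        Multiset.replicate (n - (P.filter (fun a => 1 < a)).sum) 1 ∧
    Multiset.card P + (P.filter (fun a => 1 < a)).sum =
      Multiset.card (P.filter (fun a => 1 < a)) + n := by
  set Q := P.filter (fun a => 1 < a) with hQ
  set C := P.filter (fun a => ¬ 1 < a) with hC
  have hPC : Q + C = P := Multiset.filter_add_not _ P
  have hC1 : ∀ a ∈ C, a = 1 := by
    intro a ha
    have := Multiset.of_mem_filter ha
    have := h.2 a (Multiset.mem_of_mem_filter ha)
    omega
  have hCrep : C = Multiset.replicate (Multiset.card C) 1 :=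
    Multiset.eq_replicate_card.2 hC1
  have hsumC : C.sum = Multiset.card C := by
    rw [hCrep]; simp
  have hsum : Q.sum + Multiset.card C = n := by
    have := h.1
    rw [← hPC, Multiset.sum_add, hsumC] at this
    exact this
  have hcard : Multiset.card P = Multiset.card Q + Multiset.card C := by
    rw [← hPC]; simp
  constructor
  · rw [← hPC]
    congr 1
    rw [hCrep]
    congr 1
    omega
  · omega

/-- If two families `Π₁,…,Π_r` and `Π'₁,…,Π'_r` of partitions of `n` and
`n'` respectively both satisfy `∑ p_i = (r-1)n` (resp. `∑ p'_i = (r-1)n'`),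
and for each `i` the multisets of parts greater than 1 of `Π_i` and `Π'_i`
coincide, then `n = n'` and `Π_i = Π'_i` for all `i`. -/
theorem partitions_eq_of_big_parts_eq
    (r n n' : ℕ) (hr : 2 ≤ r) (hn : 1 ≤ n) (hn' : 1 ≤ n')
    (P P' : Fin r → Multiset ℕ)
    (hpart : ∀ i, IsPartitionOf n (P i))
    (hpart' : ∀ i, IsPartitionOf n' (P' i))
    (hsum : (∑ i, Multiset.card (P i)) = (r - 1) * n)
    (hsum' : (∑ i, Multiset.card (P' i)) = (r - 1) * n')
    (hb : ∀ i, (P i).filter (fun a => 1 < a) = (P' i).filter (fun a => 1 < a)) :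
    n = n' ∧ ∀ i, P i = P' i := by
  have hd := fun i => aux_decomp n (P i) (hpart i)
  have hd' := fun i => aux_decomp n' (P' i) (hpart' i)
  -- sum the per-index equations
  have key : (∑ i, Multiset.card (P i)) + (∑ i, ((P i).filter (fun a => 1 < a)).sum) =
      (∑ i, Multiset.card ((P i).filter (fun a => 1 < a))) + r * n := by
    rw [← Finset.sum_add_distrib]
    have : (∑ i : Fin r, (Multiset.card ((P i).filter (fun a => 1 < a)) + n)) =
        (∑ i : Fin r, Multiset.card ((P i).filter (fun a => 1 < a))) + r * n := by
      rw [Finset.sum_add_distrib, Finset.sum_const, Finset.card_univ, Fintype.card_fin,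
        smul_eq_mul]
    rw [← this]
    exact Finset.sum_congr rfl (fun i _ => (hd i).2)
  have key' : (∑ i, Multiset.card (P' i)) + (∑ i, ((P i).filter (fun a => 1 < a)).sum) =
      (∑ i, Multiset.card ((P i).filter (fun a => 1 < a))) + r * n' := by
    rw [← Finset.sum_add_distrib]
    have : (∑ i : Fin r, (Multiset.card ((P i).filter (fun a => 1 < a)) + n')) =
        (∑ i : Fin r, Multiset.card ((P i).filter (fun a => 1 < a))) + r * n' := by
      rw [Finset.sum_add_distrib, Finset.sum_const, Finset.card_univ, Fintype.card_fin,
        smul_eq_mul]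
    rw [← this]
    refine Finset.sum_congr rfl (fun i _ => ?_)
    rw [hb i]
    exact (hd' i).2
  rw [hsum] at key
  rw [hsum'] at key'
  have hrn : (r - 1) * n + n = r * n := by
    have : r - 1 + 1 = r := by omega
    calc (r - 1) * n + n = (r - 1 + 1) * n := by ring
    _ = r * n := by rw [this]
  have hrn' : (r - 1) * n' + n' = r * n' := by
    have : r - 1 + 1 = r := by omega
    calc (r - 1) * n' + n' = (r - 1 + 1) * n' := by ring
    _ = r * n' := by rw [this]
  have hnn' : n = n' := by omega
  refine ⟨hnn', fun i => ?_⟩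
  rw [(hd i).1, (hd' i).1, hb i, hnn']
end

section
/- Let l ≥ 1 and let u_1, …, u_l, t be integers with 1 < u_1 ≤ u_2 ≤ ⋯ ≤ u_l and t ≥ 1. Then the following are equivalent: (i) for every integer s with 0 ≤ s ≤ t + u_1 + u_2 + ⋯ + u_l there exist x_1, …, x_l ∈ {0,1} and y ∈ {0, 1, 2, …, t} such that s = y + x_1u_1 + x_2u_2 + ⋯ + x_lu_l; (ii) for every k with 1 ≤ k ≤ l, the inequality t + Σ_{i=1}^{k−1} u_i ≥ u_k − 1 holds. In particular, the condition t ≥ u_l − 1 is sufficient for (i). -/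
/-- Every integer `s` with `0 ≤ s ≤ t + u₁ + ⋯ + u_l` can be written as
`s = y + x₁u₁ + ⋯ + x_lu_l` with each `x_i ∈ {0,1}` and `y ∈ {0,1,…,t}`. -/
def ReprAll (l : ℕ) (u : Fin l → ℤ) (t : ℤ) : Prop :=
  ∀ s : ℤ, 0 ≤ s → s ≤ t + ∑ i, u i →
    ∃ (x : Fin l → ℤ) (y : ℤ), (∀ i, x i = 0 ∨ x i = 1) ∧ 0 ≤ y ∧ y ≤ t ∧
      s = y + ∑ i, x i * u i

/-!
Adding the `u_k` in increasing order, the numbers `y + (subset sum)` cover `[0, t + ∑_{i<k} u_i]`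
before step `k`; the sums that use `u_k` cover `[u_k, u_k + t + ∑_{i<k} u_i]`, so the two
intervals join up exactly when `u_k - 1 ≤ t + ∑_{i<k} u_i`. If this fails at `k`, the number
`t + ∑_{i<k} u_i + 1` is too large for the terms `u_i` with `i < k` alone and, by monotonicity,
smaller than any sum that uses some `u_j` with `j ≥ k`.
-/

open Finset

variable {ι : Type*}

theorem sum_mul_eq_sum_filter_eq_one {x u : ι → ℤ} (hx : ∀ i, x i = 0 ∨ x i = 1)
    (S : Finset ι) : ∑ i ∈ S, x i * u i = ∑ i ∈ S with x i = 1, u i := by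
  rw [sum_filter]
  refine sum_congr rfl fun i _ => ?_
  rcases hx i with h | h <;> simp [h]

variable [LinearOrder ι]

def SubsetSumsCover (S : Finset ι) (u : ι → ℤ) (t : ℤ) : Prop :=
  ∀ s : ℤ, 0 ≤ s → s ≤ t + ∑ i ∈ S, u i →
    ∃ A ⊆ S, ∃ y : ℤ, 0 ≤ y ∧ y ≤ t ∧ s = y + ∑ i ∈ A, u i

theorem subsetSumsCover_of_le {u : ι → ℤ} {t : ℤ} (S : Finset ι)
    (h : ∀ k ∈ S, u k - 1 ≤ t + ∑ i ∈ S with i < k, u i) : SubsetSumsCover S u t := by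
  induction S using Finset.induction_on_max with
  | empty =>
    intro s hs0 hs
    exact ⟨∅, subset_refl _, s, hs0, by simpa using hs, by simp⟩
  | insert a S haS ih =>
    have ha : a ∉ S := fun h => lt_irrefl a (haS a h)
    have hlt : ∀ k ∈ S, {i ∈ insert a S | i < k} = {i ∈ S | i < k} := fun k hk => by
      rw [filter_insert, if_neg (not_lt.2 (haS k hk).le)]
    have hcover : SubsetSumsCover S u t := ih fun k hk => by
      simpa only [hlt k hk] using h k (mem_insert_of_mem hk)
    have hua : u a - 1 ≤ t + ∑ i ∈ S, u i := by
      simpa [filter_insert, filter_true_of_mem haS] using h a (mem_insert_self a S)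
    intro s hs0 hs
    rw [sum_insert ha] at hs
    by_cases hsS : s ≤ t + ∑ i ∈ S, u i
    · obtain ⟨A, hAS, y, hy0, hyt, rfl⟩ := hcover s hs0 hsS
      exact ⟨A, hAS.trans (subset_insert a S), y, hy0, hyt, rfl⟩
    · obtain ⟨A, hAS, y, hy0, hyt, hA⟩ := hcover (s - u a) (by linarith) (by linarith)
      refine ⟨insert a A, insert_subset_insert a hAS, y, hy0, hyt, ?_⟩
      rw [sum_insert fun h => ha (hAS h)]
      linarith

theorem le_of_subsetSumsCover {u : ι → ℤ} {t : ℤ} (hmono : Monotone u) (hu : ∀ i, 0 ≤ u i)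
    (ht : 0 ≤ t) {S : Finset ι} (hcover : SubsetSumsCover S u t) {k : ι} (hk : k ∈ S) :
    u k - 1 ≤ t + ∑ i ∈ S with i < k, u i := by
  set P := ∑ i ∈ S with i < k, u i
  by_contra! hgap
  have hP : P + u k ≤ ∑ i ∈ S, u i := by
    rw [← sum_filter_add_sum_filter_not S (· < k)]
    have hkS : k ∈ {i ∈ S | ¬i < k} := mem_filter.2 ⟨hk, lt_irrefl k⟩
    exact add_le_add_right (single_le_sum (fun i _ => hu i) hkS) P
  have hP0 : 0 ≤ P := sum_nonneg fun i _ => hu i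
  obtain ⟨A, hAS, y, hy0, hyt, hs⟩ := hcover (t + P + 1) (by linarith) (by linarith)
  by_cases hAk : ∃ j ∈ A, k ≤ j
  · obtain ⟨j, hjA, hkj⟩ := hAk
    have : u k ≤ ∑ i ∈ A, u i := (hmono hkj).trans (single_le_sum (fun i _ => hu i) hjA)
    linarith
  · simp only [not_exists, not_and, not_le] at hAk
    have : ∑ i ∈ A, u i ≤ P :=
      sum_le_sum_of_subset_of_nonneg (fun j hj => mem_filter.2 ⟨hAS hj, hAk j hj⟩)
        fun i _ _ => hu i
    linarith

theorem subsetSumsCover_iff {u : ι → ℤ} {t : ℤ} (hmono : Monotone u) (hu : ∀ i, 0 ≤ u i)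
    (ht : 0 ≤ t) {S : Finset ι} :
    SubsetSumsCover S u t ↔ ∀ k ∈ S, u k - 1 ≤ t + ∑ i ∈ S with i < k, u i :=
  ⟨fun h _ hk => le_of_subsetSumsCover hmono hu ht h hk, subsetSumsCover_of_le S⟩

theorem reprAll_iff_subsetSumsCover (l : ℕ) (u : Fin l → ℤ) (t : ℤ) :
    ReprAll l u t ↔ SubsetSumsCover univ u t := by
  refine forall₃_congr fun s _ _ => ⟨?_, ?_⟩
  · rintro ⟨x, y, hx, hy0, hyt, rfl⟩
    exact ⟨_, subset_univ _, y, hy0, hyt, by rw [sum_mul_eq_sum_filter_eq_one hx]⟩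
  · rintro ⟨A, -, y, hy0, hyt, rfl⟩
    refine ⟨fun i => if i ∈ A then 1 else 0, y, fun i => ?_, hy0, hyt, by simp [ite_mul]⟩
    by_cases i ∈ A <;> simp [*]

/-- Let `1 < u₁ ≤ u₂ ≤ ⋯ ≤ u_l` and `t ≥ 1` be integers. Every `s` with
`0 ≤ s ≤ t + u₁ + ⋯ + u_l` is representable as `y + x₁u₁ + ⋯ + x_lu_l`
with `x_i ∈ {0,1}`, `0 ≤ y ≤ t`, if and only if for every `k`,
`t + ∑_{i<k} u_i ≥ u_k - 1`. In particular `t ≥ u_l - 1` is sufficient. -/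
theorem repr_all_iff (l : ℕ) (hl : 1 ≤ l) (u : Fin l → ℤ) (t : ℤ)
    (hmono : Monotone u) (hu : ∀ i, 1 < u i) (ht : 1 ≤ t) :
    (ReprAll l u t ↔
      ∀ k : Fin l, u k - 1 ≤ t + ∑ i ∈ Finset.univ.filter (fun i => i < k), u i)
    ∧ (u ⟨l - 1, by omega⟩ - 1 ≤ t → ReprAll l u t) := by
  have hu0 : ∀ i, 0 ≤ u i := fun i => by linarith [hu i]
  have key : ReprAll l u t ↔
      ∀ k : Fin l, u k - 1 ≤ t + ∑ i ∈ Finset.univ.filter (fun i => i < k), u i := by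
    rw [reprAll_iff_subsetSumsCover, subsetSumsCover_iff hmono hu0 (by linarith)]
    simp only [mem_univ, forall_const]
  refine ⟨key, fun hlast => key.mpr fun k => ?_⟩
  have hk : u k ≤ u ⟨l - 1, by omega⟩ := hmono (Fin.le_def.2 (Nat.le_sub_one_of_lt k.isLt))
  linarith [sum_nonneg fun i (_ : i ∈ univ.filter (· < k)) => hu0 i]
end

section
/- Let Π be a Laurent (n,3)-passport with Π_1 = {2,2,…,2}, Π_2 ≠ {2,2,…,2}, q_2 > 1, and Σ_{i=2}^{q_2} (b_{2,i} − 2) < b_{2,1}. Then Π_2 has one of the following forms: (1) Π_2 = {1, 1, …, 1, d, d} with d ≥ 3; (2) Π_2 = {1, 1, …, 1, d−1, d} with d ≥ 3; (3) Π_2 = {1,1,1,3,3,3}; (4) Π_2 = {1, 2, 2, …, 2, 3} (one part 1, one part 3, all other parts 2). -/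
/-- The cycle type of a permutation of `Fin n`, with fixed points counted as
cycles of length 1 (so it is a partition of `n`). -/
def fullCycleType {n : ℕ} (σ : Equiv.Perm (Fin n)) : Multiset ℕ :=
  σ.cycleType + Multiset.replicate (n - σ.cycleType.sum) 1

/-- An `(n,3)`-passport: three partitions of `n`, each with fewer than `n`
parts, whose numbers of parts satisfy `p₁ + p₂ + p₃ = n + 2`. -/
def IsPassport3 (n : ℕ) (P1 P2 P3 : Multiset ℕ) : Prop :=
  2 ≤ n ∧
  (IsPartitionOf n P1 ∧ Multiset.card P1 < n) ∧
  (IsPartitionOf n P2 ∧ Multiset.card P2 < n) ∧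
  (IsPartitionOf n P3 ∧ Multiset.card P3 < n) ∧
  Multiset.card P1 + Multiset.card P2 + Multiset.card P3 = n + 2

/-- Realizability of an `(n,3)`-passport: there are permutations
`σ₁, σ₂, σ₃` of an `n`-element set whose cycle types (fixed points counted
as 1-cycles) are the prescribed partitions, whose product is the identity,
and whose generated subgroup acts transitively. -/
def Realizable3 (n : ℕ) (P1 P2 P3 : Multiset ℕ) : Prop :=
  ∃ σ1 σ2 σ3 : Equiv.Perm (Fin n),
    fullCycleType σ1 = P1 ∧ fullCycleType σ2 = P2 ∧ fullCycleType σ3 = P3 ∧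
    σ1 * σ2 * σ3 = 1 ∧
    (∀ x y : Fin n, ∃ g ∈ Subgroup.closure {σ1, σ2, σ3}, g x = y)

/-- The number of parts of `P` that are greater than `1`. -/
def qCount (P : Multiset ℕ) : ℕ := Multiset.card (P.filter (fun a => 1 < a))

/-- Let `Π` be a Laurent `(n,3)`-passport with `Π₁ = {2,…,2}`,
`Π₂ ≠ {2,…,2}`, `q₂ > 1`, and `∑_{i=2}^{q₂} (b_{2,i} - 2) < b_{2,1}`
(sum over the parts of `Π₂` greater than 1 other than the smallest one,
`b₁` being the smallest such part). Then `Π₂` is of one of four forms. -/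
theorem pi_two_classification (n : ℕ) (P1 P2 P3 : Multiset ℕ)
    (hpass : IsPassport3 n P1 P2 P3)
    (hLaurent : Multiset.card P3 = 2)
    (h1 : ∀ a ∈ P1, a = 2)
    (h2 : ¬(∀ a ∈ P2, a = 2))
    (hq2 : 1 < qCount P2)
    (b1 : ℕ) (hb1 : b1 ∈ P2.filter (fun a => 1 < a))
    (hb1min : ∀ b ∈ P2.filter (fun a => 1 < a), b1 ≤ b)
    (hcond : (((P2.filter (fun a => 1 < a)).erase b1).map (fun b => b - 2)).sum < b1) :
    (∃ d : ℕ, 3 ≤ d ∧ P2 = Multiset.replicate (n - 2 * d) 1 + {d, d}) ∨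
    (∃ d : ℕ, 3 ≤ d ∧ P2 = Multiset.replicate (n - (2 * d - 1)) 1 + {d - 1, d}) ∨
    P2 = ({1, 1, 1, 3, 3, 3} : Multiset ℕ) ∨
    P2 = 1 ::ₘ 3 ::ₘ Multiset.replicate ((n - 4) / 2) 2 := by
  obtain ⟨hn2, ⟨⟨hsum1, hpos1⟩, hc1⟩, ⟨⟨hsum2, hpos2⟩, hc2⟩, ⟨⟨hsum3, hpos3⟩, hc3⟩, hcards⟩ :=
    hpass
  have e1 : Multiset.card P1 * 2 = n := by
    have h := hsum1
    rw [Multiset.eq_replicate_card.2 h1] at h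
    simpa [Multiset.sum_replicate, smul_eq_mul] using h
  have hcardP2 : 2 * Multiset.card P2 = n := by omega
  set B := P2.filter (fun a => 1 < a) with hBdef
  set O := P2.filter (fun a => ¬ 1 < a) with hOdef
  have hsplit : B + O = P2 := Multiset.filter_add_not _ _
  set r := Multiset.card O with hrdef
  have hO : O = Multiset.replicate r 1 := by
    refine Multiset.eq_replicate_card.2 ?_
    intro b hb
    rw [hOdef, Multiset.mem_filter] at hb
    have := hpos2 b hb.1
    omega
  have hb1mem : b1 ∈ B := hb1
  have hb1gt : 1 < b1 := (Multiset.mem_filter.1 hb1mem).2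
  set B' := B.erase b1 with hB'def
  have hcons : b1 ::ₘ B' = B := Multiset.cons_erase hb1mem
  set m := Multiset.card B' with hmdef
  have hq : Multiset.card B = m + 1 := by
    rw [← hcons]; simp [hmdef]
  have hmemB' : ∀ b ∈ B', b1 ≤ b ∧ 2 ≤ b := by
    intro b hb
    have hbB : b ∈ B := Multiset.mem_of_mem_erase hb
    have := (Multiset.mem_filter.1 hbB).2
    exact ⟨hb1min b hbB, by omega⟩
  set t := ((B'.map (fun b => b - 2)).sum) with htdef
  have hcond' : t < b1 := hcond
  have hsumB' : B'.sum = t + 2 * m := by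
    have h1' : B'.map (fun b => b - 2 + 2) = B'.map id :=
      Multiset.map_congr rfl (fun b hb => by
        have := (hmemB' b hb).2; simp only [id_eq]; omega)
    calc B'.sum = (B'.map (fun b => b - 2 + 2)).sum := by rw [h1', Multiset.map_id]
      _ = (B'.map (fun b => b - 2)).sum + (B'.map (fun _ => 2)).sum :=
          Multiset.sum_map_add
      _ = t + 2 * m := by
          rw [← htdef, Multiset.map_const', Multiset.sum_replicate, smul_eq_mul, hmdef]
          ring
  have hmain : b1 + B'.sum + r = n := by
    have h := hsum2
    rw [← hsplit, Multiset.sum_add, hO, Multiset.sum_replicate, ← hcons,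
      Multiset.sum_cons, smul_eq_mul] at h
    omega
  have hcardeq : Multiset.card P2 = (m + 1) + r := by
    rw [← hsplit, Multiset.card_add, hq]
  have hr : b1 + t = r + 2 := by omega
  have hq2' : 1 ≤ m := by
    unfold qCount at hq2
    rw [← hBdef, hq] at hq2
    omega
  rcases Nat.lt_or_ge b1 3 with hb1small | hb1big
  · -- b1 = 2
    have hb1eq : b1 = 2 := by omega
    have hbnd : ∀ b ∈ B', b = 2 ∨ b = 3 := by
      intro b hb
      have hmem : b - 2 ∈ B'.map (fun x => x - 2) := Multiset.mem_map_of_mem _ hb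
      have h5 := Multiset.single_le_sum (fun x _ => Nat.zero_le x) _ hmem
      have := (hmemB' b hb).2
      omega
    rcases (show t = 0 ∨ t = 1 by omega) with ht | ht
    · exfalso
      apply h2
      intro a ha
      have hr0 : r = 0 := by omega
      have hP2B : P2 = B := by
        rw [← hsplit, hO, hr0]; simp
      rw [hP2B, ← hcons] at ha
      rcases Multiset.mem_cons.1 ha with h | h
      · omega
      · have hmem : a - 2 ∈ B'.map (fun x => x - 2) := Multiset.mem_map_of_mem _ h
        have h5 := Multiset.single_le_sum (fun x _ => Nat.zero_le x) _ hmem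
        have := (hmemB' a h).2
        omega
    · right; right; right
      have h3 : (3:ℕ) ∈ B' := by
        by_contra h3
        have ht0 : t = 0 := by
          rw [htdef]
          apply Multiset.sum_eq_zero
          intro x hx
          obtain ⟨b, hb, rfl⟩ := Multiset.mem_map.1 hx
          rcases hbnd b hb with h | h
          · omega
          · exact absurd (h ▸ hb) h3
        omega
      set B'' := B'.erase 3 with hB''def
      have hcons2 : 3 ::ₘ B'' = B' := Multiset.cons_erase h3
      have ht'' : ((B''.map (fun b => b - 2)).sum) = 0 := by
        have h6 : t = 1 + (B''.map (fun b => b - 2)).sum := by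
          rw [htdef, ← hcons2, Multiset.map_cons, Multiset.sum_cons]
        omega
      have hB''rep : B'' = Multiset.replicate (m - 1) 2 := by
        have hc : Multiset.card B'' = m - 1 := by
          rw [hB''def, Multiset.card_erase_of_mem h3, ← hmdef, Nat.pred_eq_sub_one]
        rw [← hc]
        refine Multiset.eq_replicate_card.2 ?_
        intro b hb
        have h0 : b - 2 = 0 :=
          Multiset.sum_eq_zero_iff.1 ht'' _ (Multiset.mem_map_of_mem _ hb)
        have := (hmemB' b (Multiset.mem_of_mem_erase hb)).2
        omega
      have hrep : Multiset.replicate ((n - 4) / 2) 2 = 2 ::ₘ Multiset.replicate (m - 1) 2 := by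
        have hnm : (n - 4) / 2 = (m - 1) + 1 := by omega
        rw [hnm, Multiset.replicate_succ]
      have hr1 : r = 1 := by omega
      rw [← hsplit, ← hcons, ← hcons2, hB''rep, hO, hrep, hb1eq, hr1]
      simp only [Multiset.replicate_one, ← Multiset.singleton_add]
      abel
  · -- b1 ≥ 3
    have htlow : m * (b1 - 2) ≤ t := by
      have h7 : ((B'.map (fun _ => b1 - 2)).sum) ≤ ((B'.map (fun b => b - 2)).sum) := by
        apply Multiset.sum_map_le_sum_map
        intro b hb
        have := (hmemB' b hb).1
        omega
      rw [Multiset.map_const', Multiset.sum_replicate, smul_eq_mul, ← hmdef] at h7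
      exact h7
    have hm2 : m ≤ 2 := by
      by_contra hm2
      have h3' : 3 * (b1 - 2) ≤ m * (b1 - 2) := Nat.mul_le_mul_right _ (by omega)
      omega
    rcases (show m = 1 ∨ m = 2 by omega) with hm | hm
    · obtain ⟨x, hx⟩ := Multiset.card_eq_one.1 (by rw [← hmdef, hm])
      have hxmem : x ∈ B' := by rw [hx]; exact Multiset.mem_singleton_self x
      have hxge : b1 ≤ x := (hmemB' x hxmem).1
      have htx : t = x - 2 := by
        rw [htdef, hx]; simp
      have hsx : B'.sum = x := by rw [hx]; simp
      rcases (show x = b1 ∨ x = b1 + 1 by omega) with hxv | hxv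
      · left
        refine ⟨b1, hb1big, ?_⟩
        have hrv : r = n - 2 * b1 := by omega
        rw [← hsplit, ← hcons, hx, hxv, hO, hrv, add_comm]
        rfl
      · right; left
        refine ⟨b1 + 1, by omega, ?_⟩
        have hrv : r = n - (2 * (b1 + 1) - 1) := by omega
        rw [← hsplit, ← hcons, hx, hxv, hO, hrv, add_comm]
        rfl
    · obtain ⟨x, y, hxy⟩ := Multiset.card_eq_two.1 (by rw [← hmdef, hm])
      have hxmem : x ∈ B' := by rw [hxy]; simp
      have hymem : y ∈ B' := by rw [hxy]; simp
      have hxge := (hmemB' x hxmem).1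
      have hyge := (hmemB' y hymem).1
      have htxy : t = (x - 2) + (y - 2) := by
        rw [htdef, hxy]; simp
      have hb13 : b1 = 3 ∧ x = 3 ∧ y = 3 := by omega
      obtain ⟨hb13, hx3, hy3⟩ := hb13
      right; right; left
      have hr3 : r = 3 := by omega
      rw [← hsplit, ← hcons, hxy, hO, hb13, hx3, hy3, hr3]
      decide
end

section
/- Let n ≥ 4 be even and let 1 ≤ s ≤ n/2. The Laurent (n,3)-passport with Π_1 = Π_2 = {2,2,…,2} (each consisting of n/2 parts equal to 2) and Π_3 = {s, n−s} is realizable if and only if s = n/2. -/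
namespace LaurentAux

open Equiv Equiv.Perm List

lemma sq_eq_one_of_fct {n m : ℕ} {σ : Equiv.Perm (Fin n)}
    (h : fullCycleType σ = Multiset.replicate m 2) : σ * σ = 1 := by
  have hle : σ.cycleType ≤ fullCycleType σ := Multiset.le_add_right _ _
  have h2 : ∀ a ∈ σ.cycleType, a ∣ 2 := by
    intro a ha
    have hmem := Multiset.mem_of_le hle ha
    rw [h] at hmem
    rw [Multiset.eq_of_mem_replicate hmem]
  have hdvd : orderOf σ ∣ 2 := by
    rw [← Equiv.Perm.lcm_cycleType]
    exact Multiset.lcm_dvd.mpr h2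
  have := orderOf_dvd_iff_pow_eq_one.mp hdvd
  rwa [pow_two] at this

lemma fct_fpf_involution {m : ℕ} (hm : 0 < m) (σ : Equiv.Perm (Fin (2*m)))
    (h2 : σ * σ = 1) (hf : ∀ x, σ x ≠ x) :
    fullCycleType σ = Multiset.replicate m 2 := by
  have hne : σ ≠ 1 := by
    intro h
    exact hf ⟨0, by omega⟩ (by rw [h]; rfl)
  have hord : orderOf σ = 2 := orderOf_eq_prime (by rw [pow_two]; exact h2) hne
  obtain ⟨k, hk⟩ := σ.cycleType_prime_order (by rw [hord]; exact Nat.prime_two)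
  rw [hord] at hk
  have hsupp : σ.support = Finset.univ :=
    Finset.eq_univ_iff_forall.mpr fun x => Equiv.Perm.mem_support.mpr (hf x)
  have hsum : σ.cycleType.sum = 2*m := by
    rw [Equiv.Perm.sum_cycleType, hsupp]
    simp
  have hkm : k + 1 = m := by
    rw [hk, Multiset.sum_replicate] at hsum
    simp at hsum
    omega
  unfold fullCycleType
  rw [hsum, hk, hkm]
  simp

def oddList (m : ℕ) : List (Fin (2*m)) :=
  (List.finRange m).map (fun i => ⟨2*i.val+1, by omega⟩)

def evenList (m : ℕ) : List (Fin (2*m)) :=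
  (List.finRange m).map (fun i => ⟨2*i.val, by omega⟩)

lemma oddList_length (m : ℕ) : (oddList m).length = m := by simp [oddList]

lemma evenList_length (m : ℕ) : (evenList m).length = m := by simp [evenList]

lemma oddList_nodup (m : ℕ) : (oddList m).Nodup := by
  refine (List.nodup_finRange m).map ?_
  intro i j hij
  simp only [Fin.mk.injEq] at hij
  exact Fin.ext (by omega)

lemma evenList_nodup (m : ℕ) : (evenList m).Nodup := by
  refine (List.nodup_finRange m).map ?_
  intro i j hij
  simp only [Fin.mk.injEq] at hij
  exact Fin.ext (by omega)

lemma mem_oddList {m v : ℕ} (hv : v < 2*m) :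
    (⟨v, hv⟩ : Fin (2*m)) ∈ oddList m ↔ v % 2 = 1 := by
  simp only [oddList, List.mem_map, List.mem_finRange, true_and, Fin.mk.injEq]
  constructor
  · rintro ⟨i, hi⟩; omega
  · intro h
    exact ⟨⟨v / 2, by omega⟩, by simp; omega⟩

lemma mem_evenList {m v : ℕ} (hv : v < 2*m) :
    (⟨v, hv⟩ : Fin (2*m)) ∈ evenList m ↔ v % 2 = 0 := by
  simp only [evenList, List.mem_map, List.mem_finRange, true_and, Fin.mk.injEq]
  constructor
  · rintro ⟨i, hi⟩; omega
  · intro h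
    exact ⟨⟨v / 2, by omega⟩, by simp; omega⟩

lemma oddList_getElem (m : ℕ) (i : ℕ) (h : i < m) :
    (oddList m)[i]'(by simp [oddList_length]; omega) = ⟨2*i+1, by omega⟩ := by
  simp [oddList]

lemma evenList_getElem (m : ℕ) (i : ℕ) (h : i < m) :
    (evenList m)[i]'(by simp [evenList_length]; omega) = ⟨2*i, by omega⟩ := by
  simp [evenList]

lemma fo_apply (m : ℕ) (i : ℕ) (h : i < m) :
    (oddList m).formPerm ⟨2*i+1, by omega⟩ = ⟨2*((i+1)%m)+1, by have := Nat.mod_lt (i+1) (show 0 < m by omega); omega⟩ := by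
  have h1 := List.formPerm_apply_getElem (oddList m) (oddList_nodup m) i (by simp [oddList_length]; omega)
  rw [oddList_getElem m i h] at h1
  simp only [oddList_length] at h1
  rw [h1, oddList_getElem m ((i+1)%m) (Nat.mod_lt _ (by omega))]

lemma fe_apply (m : ℕ) (i : ℕ) (h : i < m) :
    (evenList m).formPerm ⟨2*i, by omega⟩ = ⟨2*((i+1)%m), by have := Nat.mod_lt (i+1) (show 0 < m by omega); omega⟩ := by
  have h1 := List.formPerm_apply_getElem (evenList m) (evenList_nodup m) i (by simp [evenList_length]; omega)
  rw [evenList_getElem m i h] at h1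
  simp only [evenList_length] at h1
  rw [h1, evenList_getElem m ((i+1)%m) (Nat.mod_lt _ (by omega))]

lemma fo_fix {m v : ℕ} (hv : v < 2*m) (h : v % 2 = 0) :
    (oddList m).formPerm ⟨v, hv⟩ = ⟨v, hv⟩ :=
  List.formPerm_apply_of_notMem (by rw [mem_oddList]; omega)

lemma fe_fix {m v : ℕ} (hv : v < 2*m) (h : v % 2 = 1) :
    (evenList m).formPerm ⟨v, hv⟩ = ⟨v, hv⟩ :=
  List.formPerm_apply_of_notMem (by rw [mem_evenList]; omega)

def pp (m : ℕ) : Equiv.Perm (Fin (2*m)) :=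
  (oddList m).formPerm * ((evenList m).formPerm)⁻¹

lemma pp_odd (m : ℕ) (i : ℕ) (h : i < m) :
    pp m ⟨2*i+1, by omega⟩ = ⟨2*((i+1)%m)+1, by have := Nat.mod_lt (i+1) (show 0 < m by omega); omega⟩ := by
  have hfix : (evenList m).formPerm⁻¹ ⟨2*i+1, by omega⟩ = ⟨2*i+1, by omega⟩ := by
    rw [Equiv.Perm.inv_eq_iff_eq]
    exact (fe_fix _ (by omega)).symm
  rw [pp, Equiv.Perm.mul_apply, hfix, fo_apply m i h]

lemma pp_even (m : ℕ) (i : ℕ) (h : i < m) :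
    pp m ⟨2*i, by omega⟩ = ⟨2*((i+m-1)%m), by have := Nat.mod_lt (i+m-1) (show 0 < m by omega); omega⟩ := by
  have hj : (i+m-1) % m < m := Nat.mod_lt _ (by omega)
  have hinv : (evenList m).formPerm⁻¹ ⟨2*i, by omega⟩
      = ⟨2*((i+m-1)%m), by omega⟩ := by
    rw [Equiv.Perm.inv_eq_iff_eq]
    rw [fe_apply m ((i+m-1)%m) hj]
    have : ((i+m-1)%m + 1) % m = i := by
      rw [Nat.mod_add_mod]
      have e : i + m - 1 + 1 = i + m := by omega
      rw [e, Nat.add_mod_right, Nat.mod_eq_of_lt h]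
    simp_rw [this]
  rw [pp, Equiv.Perm.mul_apply, hinv, fo_fix _ (by omega)]

-- sigma1
def sig1fun (m : ℕ) : Fin (2*m) → Fin (2*m) := fun x =>
  if h : x.val % 2 = 0 then ⟨x.val+1, by omega⟩ else ⟨x.val-1, by omega⟩

lemma sig1fun_apply (m v : ℕ) (hv : v < 2*m) :
    sig1fun m ⟨v, hv⟩ = if h : v % 2 = 0 then ⟨v+1, by omega⟩ else ⟨v-1, by omega⟩ := rfl

lemma sig1fun_invol (m : ℕ) : Function.Involutive (sig1fun m) := by
  intro x
  obtain ⟨v, hv⟩ := x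
  by_cases h : v % 2 = 0
  · have h1 : sig1fun m ⟨v, hv⟩ = ⟨v+1, by omega⟩ := by rw [sig1fun_apply, dif_pos h]
    rw [h1, sig1fun_apply, dif_neg (by omega)]
    exact Fin.ext (by simp)
  · have h1 : sig1fun m ⟨v, hv⟩ = ⟨v-1, by omega⟩ := by rw [sig1fun_apply, dif_neg h]
    rw [h1, sig1fun_apply, dif_pos (by omega)]
    exact Fin.ext (by simp; omega)

def sigma1 (m : ℕ) : Equiv.Perm (Fin (2*m)) := (sig1fun_invol m).toPerm

lemma sigma1_apply (m : ℕ) (v : ℕ) (hv : v < 2*m) :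
    sigma1 m ⟨v, hv⟩ = if h : v % 2 = 0 then ⟨v+1, by omega⟩ else ⟨v-1, by omega⟩ := rfl

lemma sigma1_even (m : ℕ) (i : ℕ) (h : i < m) :
    sigma1 m ⟨2*i, by omega⟩ = ⟨2*i+1, by omega⟩ := by
  rw [sigma1_apply]
  simp

lemma sigma1_odd (m : ℕ) (i : ℕ) (h : i < m) :
    sigma1 m ⟨2*i+1, by omega⟩ = ⟨2*i, by omega⟩ := by
  rw [sigma1_apply]
  rw [dif_neg (by omega)]
  exact Fin.ext (by simp)

lemma sigma1_sq (m : ℕ) : sigma1 m * sigma1 m = 1 := by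
  ext x
  simp [sigma1, Equiv.Perm.mul_apply, (sig1fun_invol m) x]

lemma sigma1_fpf (m : ℕ) (x : Fin (2*m)) : sigma1 m x ≠ x := by
  obtain ⟨v, hv⟩ := x
  rw [sigma1_apply]
  split_ifs with h <;> (intro hc; simp only [Fin.mk.injEq] at hc; omega)

def sigma2 (m : ℕ) : Equiv.Perm (Fin (2*m)) := sigma1 m * pp m

lemma sigma2_even (m : ℕ) (i : ℕ) (h : i < m) :
    sigma2 m ⟨2*i, by omega⟩ = ⟨2*((i+m-1)%m)+1, by have := Nat.mod_lt (i+m-1) (show 0 < m by omega); omega⟩ := by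
  rw [sigma2, Equiv.Perm.mul_apply, pp_even m i h, sigma1_even m _ (Nat.mod_lt _ (by omega))]

lemma sigma2_odd (m : ℕ) (i : ℕ) (h : i < m) :
    sigma2 m ⟨2*i+1, by omega⟩ = ⟨2*((i+1)%m), by have := Nat.mod_lt (i+1) (show 0 < m by omega); omega⟩ := by
  rw [sigma2, Equiv.Perm.mul_apply, pp_odd m i h, sigma1_odd m _ (Nat.mod_lt _ (by omega))]

lemma fin_cases' {m : ℕ} (x : Fin (2*m)) :
    (∃ i : ℕ, ∃ h : i < m, x = ⟨2*i, by omega⟩) ∨ (∃ i : ℕ, ∃ h : i < m, x = ⟨2*i+1, by omega⟩) := by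
  obtain ⟨v, hv⟩ := x
  by_cases h : v % 2 = 0
  · exact Or.inl ⟨v/2, by omega, Fin.ext (by simp; omega)⟩
  · exact Or.inr ⟨v/2, by omega, Fin.ext (by simp; omega)⟩

lemma sigma2_sq (m : ℕ) (hm : 1 ≤ m) : sigma2 m * sigma2 m = 1 := by
  ext x
  rcases fin_cases' x with ⟨i, h, rfl⟩ | ⟨i, h, rfl⟩
  · have hj : (i+m-1)%m < m := Nat.mod_lt _ (by omega)
    rw [Equiv.Perm.mul_apply, sigma2_even m i h, sigma2_odd m _ hj]
    have : ((i+m-1)%m + 1) % m = i := by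
      rw [Nat.mod_add_mod]
      have e : i + m - 1 + 1 = i + m := by omega
      rw [e, Nat.add_mod_right, Nat.mod_eq_of_lt h]
    simp [this]
  · have hj : (i+1)%m < m := Nat.mod_lt _ (by omega)
    rw [Equiv.Perm.mul_apply, sigma2_odd m i h, sigma2_even m _ hj]
    have : ((i+1)%m + m - 1) % m = i := by
      have e : (i+1)%m + m - 1 = (i+1)%m + (m-1) := by omega
      rw [e, Nat.mod_add_mod]
      have e2 : i + 1 + (m - 1) = i + m := by omega
      rw [e2, Nat.add_mod_right, Nat.mod_eq_of_lt h]
    simp [this]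

lemma sigma2_fpf (m : ℕ) (hm : 1 ≤ m) (x : Fin (2*m)) : sigma2 m x ≠ x := by
  rcases fin_cases' x with ⟨i, h, rfl⟩ | ⟨i, h, rfl⟩
  · rw [sigma2_even m i h]
    intro hc; have := congrArg Fin.val hc; simp at this; omega
  · rw [sigma2_odd m i h]
    intro hc; have := congrArg Fin.val hc; simp at this; omega

lemma pp_disjoint (m : ℕ) :
    Equiv.Perm.Disjoint (oddList m).formPerm ((evenList m).formPerm)⁻¹ := by
  intro x
  obtain ⟨v, hv⟩ := x
  by_cases h : v % 2 = 0
  · exact Or.inl (fo_fix hv h)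
  · right
    rw [Equiv.Perm.inv_eq_iff_eq]
    exact (fe_fix hv (by omega)).symm

lemma fo_cycleType (m : ℕ) (hm : 2 ≤ m) :
    ((oddList m).formPerm).cycleType = {m} := by
  have hc : ((oddList m).formPerm).IsCycle :=
    List.isCycle_formPerm (oddList_nodup m) (by rw [oddList_length]; omega)
  rw [hc.cycleType]
  rw [List.support_formPerm_of_nodup _ (oddList_nodup m)
    (fun x hx => by apply_fun List.length at hx; rw [oddList_length] at hx; simp at hx; omega)]
  rw [List.toFinset_card_of_nodup (oddList_nodup m), oddList_length]

lemma fe_cycleType (m : ℕ) (hm : 2 ≤ m) :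
    ((evenList m).formPerm).cycleType = {m} := by
  have hc : ((evenList m).formPerm).IsCycle :=
    List.isCycle_formPerm (evenList_nodup m) (by rw [evenList_length]; omega)
  rw [hc.cycleType]
  rw [List.support_formPerm_of_nodup _ (evenList_nodup m)
    (fun x hx => by apply_fun List.length at hx; rw [evenList_length] at hx; simp at hx; omega)]
  rw [List.toFinset_card_of_nodup (evenList_nodup m), evenList_length]

lemma pp_cycleType (m : ℕ) (hm : 2 ≤ m) : (pp m).cycleType = {m, m} := by
  rw [pp, (pp_disjoint m).cycleType_mul, fo_cycleType m hm, Equiv.Perm.cycleType_inv,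
    fe_cycleType m hm]
  rfl

-- transitivity helper
lemma pp_pow_even (m : ℕ) (hm : 1 ≤ m) :
    ∀ k i : ℕ, (hi : i < m) → k ≤ i → (pp m ^ k) ⟨2*i, by omega⟩ = ⟨2*(i-k), by omega⟩ := by
  intro k
  induction k with
  | zero => intro i hi _; simp
  | succ k ih =>
    intro i hi hk
    rw [pow_succ, Equiv.Perm.mul_apply]
    have h1 : pp m ⟨2*i, by omega⟩ = ⟨2*(i-1), by omega⟩ := by
      rw [pp_even m i hi]
      have e : (i + m - 1) % m = i - 1 := by
        have e2 : i + m - 1 = (i-1) + m := by omega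
        rw [e2, Nat.add_mod_right, Nat.mod_eq_of_lt (by omega)]
      simp [e]
    rw [h1, ih (i-1) (by omega) (by omega)]
    congr 1
    omega


lemma construction (m : ℕ) (hm : 2 ≤ m) :
    Realizable3 (2*m) (Multiset.replicate m 2) (Multiset.replicate m 2) {m, m} := by
  refine ⟨sigma1 m, sigma2 m, (pp m)⁻¹, ?_, ?_, ?_, ?_, ?_⟩
  · exact fct_fpf_involution (by omega) _ (sigma1_sq m) (sigma1_fpf m)
  · exact fct_fpf_involution (by omega) _ (sigma2_sq m (by omega)) (sigma2_fpf m (by omega))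
  · unfold fullCycleType
    rw [Equiv.Perm.cycleType_inv, pp_cycleType m hm]
    have hsum : ({m, m} : Multiset ℕ).sum = 2*m := by
      simp [Multiset.sum_cons]
      omega
    rw [hsum]
    simp
  · rw [sigma2]
    calc sigma1 m * (sigma1 m * pp m) * (pp m)⁻¹
        = (sigma1 m * sigma1 m) * (pp m * (pp m)⁻¹) := by group
      _ = 1 := by rw [sigma1_sq]; simp
  · -- transitivity
    have hmem1 : sigma1 m ∈ Subgroup.closure {sigma1 m, sigma2 m, (pp m)⁻¹} :=
      Subgroup.subset_closure (by simp)
    have hmem3 : (pp m)⁻¹ ∈ Subgroup.closure {sigma1 m, sigma2 m, (pp m)⁻¹} :=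
      Subgroup.subset_closure (by simp)
    have hmemp : pp m ∈ Subgroup.closure {sigma1 m, sigma2 m, (pp m)⁻¹} := by
      have := inv_mem hmem3
      simpa using this
    have key : ∀ x : Fin (2*m), ∃ g ∈ Subgroup.closure {sigma1 m, sigma2 m, (pp m)⁻¹},
        g x = ⟨0, by omega⟩ := by
      intro x
      rcases fin_cases' x with ⟨i, h, rfl⟩ | ⟨i, h, rfl⟩
      · refine ⟨pp m ^ i, pow_mem hmemp i, ?_⟩
        have := pp_pow_even m (by omega) i i h le_rfl
        simpa using this
      · refine ⟨pp m ^ i * sigma1 m, mul_mem (pow_mem hmemp i) hmem1, ?_⟩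
        rw [Equiv.Perm.mul_apply, sigma1_odd m i h]
        have := pp_pow_even m (by omega) i i h le_rfl
        simpa using this
    intro x y
    obtain ⟨g, hg, hgx⟩ := key x
    obtain ⟨g', hg', hgy⟩ := key y
    refine ⟨g'⁻¹ * g, mul_mem (inv_mem hg') hg, ?_⟩
    rw [Equiv.Perm.mul_apply, hgx, ← hgy]
    simp

end LaurentAux

/-- For even `n ≥ 4` and `1 ≤ s ≤ n/2`, the Laurent `(n,3)`-passport with
`Π₁ = Π₂ = {2,…,2}` and `Π₃ = {s, n-s}` is realizable iff `s = n/2`. -/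
theorem laurent_q3_all_two_realizable_iff
    (n s : ℕ) (hn : 4 ≤ n) (heven : Even n)
    (hs1 : 1 ≤ s) (hs2 : 2 * s ≤ n) :
    Realizable3 n (Multiset.replicate (n / 2) 2) (Multiset.replicate (n / 2) 2)
        {s, n - s} ↔ 2 * s = n := by
  constructor
  · rintro ⟨σ1, σ2, σ3, h1, h2, h3, hprod, htrans⟩
    by_contra hne
    have hlt : 2*s < n := by omega
    have hsq1 : σ1 * σ1 = 1 := LaurentAux.sq_eq_one_of_fct h1
    have hsq2 : σ2 * σ2 = 1 := LaurentAux.sq_eq_one_of_fct h2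
    have hinv1 : σ1⁻¹ = σ1 := inv_eq_of_mul_eq_one_right hsq1
    have hinv2 : σ2⁻¹ = σ2 := inv_eq_of_mul_eq_one_right hsq2
    have h31 : σ3 = σ2 * σ1 := by
      have h' : σ3 = (σ1 * σ2)⁻¹ := eq_inv_of_mul_eq_one_right hprod
      rw [h', mul_inv_rev, hinv1, hinv2]
    have hc : σ1 * σ3 * σ1⁻¹ = σ3⁻¹ := by
      rw [h31, hinv1, mul_inv_rev, hinv1, hinv2]
      calc σ1 * (σ2 * σ1) * σ1 = σ1 * σ2 * (σ1 * σ1) := by group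
        _ = σ1 * σ2 := by rw [hsq1, mul_one]
    have hzk : ∀ (k : ℤ) (z : Fin n), σ1 ((σ3^k) z) = (σ3^(-k)) (σ1 z) := by
      intro k z
      have h' : σ1 * σ3^k * σ1⁻¹ = σ3^(-k) := by
        rw [← conj_zpow, hc, inv_zpow, zpow_neg]
      have := congrArg (fun g : Equiv.Perm (Fin n) => g (σ1 z)) h'
      simpa only [Equiv.Perm.mul_apply, Equiv.Perm.coe_inv, Equiv.symm_apply_apply] using this
    have hstep : ∀ x y : Fin n, σ3.SameCycle x y → σ3.SameCycle (σ1 x) (σ1 y) := by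
      rintro x y ⟨k, hk⟩
      exact ⟨-k, by rw [← hk]; exact (hzk k x).symm⟩
    have hns : n - s ∈ σ3.cycleType := by
      have hmem : (n - s) ∈ fullCycleType σ3 := by rw [h3]; simp
      unfold fullCycleType at hmem
      rcases Multiset.mem_add.mp hmem with h | h
      · exact h
      · have := Multiset.eq_of_mem_replicate h; omega
    rw [Equiv.Perm.cycleType_def, Multiset.mem_map] at hns
    obtain ⟨c, hc_mem, hc_card⟩ := hns
    simp only [Function.comp_apply] at hc_card
    have hcpos : 0 < c.support.card := by omega
    obtain ⟨x₀, hx₀⟩ := Finset.card_pos.mp hcpos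
    have hc_mem' : c ∈ σ3.cycleFactorsFinset := hc_mem
    have hcyc : c = σ3.cycleOf x₀ := Equiv.Perm.cycle_is_cycleOf hx₀ hc_mem'
    have hx₀s : x₀ ∈ σ3.support := by
      have h' := hx₀
      rw [hcyc] at h'
      exact (Equiv.Perm.mem_support_cycleOf_iff.mp h').2
    have hCmem : ∀ y, y ∈ c.support ↔ σ3.SameCycle x₀ y := by
      intro y
      rw [hcyc, Equiv.Perm.mem_support_cycleOf_iff]
      exact ⟨fun h => h.1, fun h => ⟨h, hx₀s⟩⟩
    have hC1 : ∀ y, y ∈ c.support → σ1 y ∈ c.support := by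
      intro y hy
      rw [hCmem] at hy ⊢
      by_cases hcase : σ3.SameCycle x₀ (σ1 x₀)
      · exact hcase.trans (hstep _ _ hy)
      · exfalso
        have hx₁s : σ1 x₀ ∈ σ3.support := by
          rw [Equiv.Perm.mem_support] at hx₀s ⊢
          intro hfix
          apply hx₀s
          have h1' := hzk 1 x₀
          rw [zpow_one, zpow_neg, zpow_one] at h1'
          have hfix' : σ3⁻¹ (σ1 x₀) = σ1 x₀ := by
            rw [Equiv.Perm.inv_eq_iff_eq, hfix]
          rw [hfix'] at h1'
          exact σ1.injective h1'
        have hC'mem : ∀ z, z ∈ (σ3.cycleOf (σ1 x₀)).support ↔ σ3.SameCycle (σ1 x₀) z := by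
          intro z
          rw [Equiv.Perm.mem_support_cycleOf_iff]
          exact ⟨fun h => h.1, fun h => ⟨h, hx₁s⟩⟩
        have himg : Finset.image σ1 c.support ⊆ (σ3.cycleOf (σ1 x₀)).support := by
          intro z hz
          obtain ⟨w, hw, rfl⟩ := Finset.mem_image.mp hz
          rw [hC'mem]
          exact hstep _ _ ((hCmem w).mp hw)
        have hcard' : n - s ≤ (σ3.cycleOf (σ1 x₀)).support.card := by
          have h' := Finset.card_le_card himg
          rwa [Finset.card_image_of_injective _ σ1.injective, hc_card] at h'
        have hdisj : Disjoint c.support (σ3.cycleOf (σ1 x₀)).support := by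
          rw [Finset.disjoint_left]
          intro z hz hz'
          exact hcase (((hCmem z).mp hz).trans ((hC'mem z).mp hz').symm)
        have hun : (c.support ∪ (σ3.cycleOf (σ1 x₀)).support).card ≤ n := by
          have h' := Finset.card_le_univ (c.support ∪ (σ3.cycleOf (σ1 x₀)).support)
          simpa using h'
        rw [Finset.card_union_of_disjoint hdisj, hc_card] at hun
        omega
    have hC3 : ∀ y, y ∈ c.support → σ3 y ∈ c.support := by
      intro y hy
      rw [hCmem] at hy ⊢
      exact hy.apply_right
    have hC3inv : ∀ y, y ∈ c.support → σ3⁻¹ y ∈ c.support := by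
      intro y hy
      rw [hCmem] at hy ⊢
      exact Equiv.Perm.SameCycle.symm_apply_right hy
    have hs1invol : ∀ z, σ1 (σ1 z) = z := by
      intro z
      have := congrArg (fun g : Equiv.Perm (Fin n) => g z) hsq1
      simpa [Equiv.Perm.mul_apply] using this
    have hs2invol : ∀ z, σ2 (σ2 z) = z := by
      intro z
      have := congrArg (fun g : Equiv.Perm (Fin n) => g z) hsq2
      simpa [Equiv.Perm.mul_apply] using this
    have h2eq : σ2 = σ1 * σ3⁻¹ := by
      rw [h31, mul_inv_rev, hinv1, ← mul_assoc, hsq1, one_mul, hinv2]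
    have hC2 : ∀ y, y ∈ c.support → σ2 y ∈ c.support := by
      intro y hy
      rw [h2eq, Equiv.Perm.mul_apply]
      exact hC1 _ (hC3inv _ hy)
    have hP : ∀ g ∈ Subgroup.closure {σ1, σ2, σ3}, ∀ y, g y ∈ c.support ↔ y ∈ c.support := by
      intro g hg
      refine Subgroup.closure_induction ?_ ?_ ?_ ?_ hg
      · intro x hx
        have hiff : ∀ τ : Equiv.Perm (Fin n), (∀ z, τ (τ z) = z) →
            (∀ y, y ∈ c.support → τ y ∈ c.support) →
            ∀ y, τ y ∈ c.support ↔ y ∈ c.support := by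
          intro τ hti htc y
          constructor
          · intro h
            have := htc _ h
            rwa [hti] at this
          · exact htc y
        simp only [Set.mem_insert_iff, Set.mem_singleton_iff] at hx
        rcases hx with rfl | rfl | rfl
        · exact hiff _ hs1invol hC1
        · exact hiff _ hs2invol hC2
        · intro y
          constructor
          · intro h
            have := hC3inv _ h
            rwa [Equiv.Perm.coe_inv, Equiv.symm_apply_apply] at this
          · exact hC3 y
      · intro y; simp
      · intro a b ha hb hpa hpb y
        rw [Equiv.Perm.mul_apply, hpa, hpb]
      · intro a ha hpa y
        have := hpa (a⁻¹ y)
        rw [Equiv.Perm.coe_inv, Equiv.apply_symm_apply] at this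
        exact this.symm
    have hCune : c.support ≠ Finset.univ := by
      intro h
      have h' := congrArg Finset.card h
      rw [hc_card] at h'
      simp at h'
      omega
    obtain ⟨y, hy⟩ : ∃ y, y ∉ c.support := by
      by_contra hall
      push_neg at hall
      exact hCune (Finset.eq_univ_iff_forall.mpr hall)
    obtain ⟨g, hg, hgv⟩ := htrans y x₀
    exact hy ((hP g hg y).mp (by rw [hgv]; exact hx₀))
  · intro h
    subst h
    have e1 : 2*s/2 = s := by omega
    have e2 : 2*s - s = s := by omega
    rw [e1, e2]
    exact LaurentAux.construction s (by omega)
end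

section
/- Let n ≥ 4 be even. The Laurent (n,3)-passport with Π_1 = {2,2,…,2} (n/2 parts equal to 2), Π_2 consisting of one part 1, (n−4)/2 parts equal to 2, and one part 3, and Π_3 = {n/2, n/2}, is not realizable. -/
open Equiv Equiv.Perm

theorem Equiv.Perm.apply_inv_self {α : Type*} (f : Perm α) (x : α) : f (f⁻¹ x) = x :=
  f.apply_symm_apply x

theorem Equiv.Perm.inv_apply_self {α : Type*} (f : Perm α) (x : α) : f⁻¹ (f x) = x :=
  f.symm_apply_apply x

namespace LQ3

set_option linter.unusedSectionVars false

variable {α : Type} [Fintype α] [DecidableEq α]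

def orbSet (σ : Perm α) (x : α) : Set α := {y | σ.SameCycle x y}

lemma mem_orbSet {σ : Perm α} {x y : α} : y ∈ orbSet σ x ↔ σ.SameCycle x y := Iff.rfl

lemma sameCycle_iff_nat {σ : Perm α} {x y : α} :
    σ.SameCycle x y ↔ ∃ n : ℕ, (σ ^ n) x = y := by
  constructor
  · intro h
    obtain ⟨i, _, hi⟩ := h.exists_pow_eq'
    exact ⟨i, hi⟩
  · rintro ⟨n, rfl⟩
    exact ⟨(n : ℤ), by rw [zpow_natCast]⟩

section Splice

variable (σ : Perm α) (p q : α)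

def splice : Perm α := σ * Equiv.swap (σ⁻¹ p) q

variable {σ p q}

lemma preim_ne (hpq : σ p = q) (hne : p ≠ q) : σ⁻¹ p ≠ p := by
  intro h
  have h2 := congrArg σ h
  rw [Perm.apply_inv_self, hpq] at h2
  exact hne h2

lemma splice_p (hpq : σ p = q) (hne : p ≠ q) : splice σ p q p = q := by
  have h1 : p ≠ σ⁻¹ p := (preim_ne hpq hne).symm
  simp only [splice, Perm.mul_apply, Equiv.swap_apply_of_ne_of_ne h1 hne, hpq]

lemma splice_q : splice σ p q q = p := by
  simp only [splice, Perm.mul_apply, Equiv.swap_apply_right, Perm.apply_inv_self]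

lemma splice_pre : splice σ p q (σ⁻¹ p) = σ q := by
  by_cases h : σ⁻¹ p = q
  · simp only [splice, Perm.mul_apply, h, Equiv.swap_self, Equiv.refl_apply]
  · simp only [splice, Perm.mul_apply, Equiv.swap_apply_left]

lemma splice_apply_of_ne {t : α} (h1 : t ≠ σ⁻¹ p) (h2 : t ≠ q) :
    splice σ p q t = σ t := by
  simp only [splice, Perm.mul_apply, Equiv.swap_apply_of_ne_of_ne h1 h2]

lemma splice_ne (hpq : σ p = q) (hne : p ≠ q) {t : α} (h1 : t ≠ p) (h2 : t ≠ q) :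
    splice σ p q t ≠ p ∧ splice σ p q t ≠ q := by
  constructor
  · intro h
    exact h2 ((splice σ p q).injective (h.trans ((splice_q (σ := σ) (p := p) (q := q))).symm))
  · intro h
    exact h1 ((splice σ p q).injective (h.trans (splice_p hpq hne).symm))

lemma splice_pow_ne (hpq : σ p = q) (hne : p ≠ q) {t : α} (h1 : t ≠ p) (h2 : t ≠ q) (n : ℕ) :
    ((splice σ p q) ^ n) t ≠ p ∧ ((splice σ p q) ^ n) t ≠ q := by
  induction n with
  | zero => exact ⟨h1, h2⟩
  | succ k ih =>
    rw [pow_succ', Perm.mul_apply]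
    exact splice_ne hpq hne ih.1 ih.2

lemma sameCycle_splice_step (hpq : σ p = q) {t : α} (h2 : t ≠ q) :
    σ.SameCycle t (splice σ p q t) := by
  by_cases ht : t = σ⁻¹ p
  · subst ht
    rw [splice_pre]
    refine sameCycle_iff_nat.mpr ⟨3, ?_⟩
    have e1 : σ (σ⁻¹ p) = p := Perm.apply_inv_self σ p
    show σ (σ (σ (σ⁻¹ p))) = σ q
    rw [e1, hpq]
  · rw [splice_apply_of_ne ht h2]
    exact ⟨1, by simp⟩

lemma sameCycle_splice_to (hpq : σ p = q) (hne : p ≠ q) {s t : α} (hs1 : s ≠ p) (hs2 : s ≠ q)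
    (h : (splice σ p q).SameCycle s t) : σ.SameCycle s t := by
  obtain ⟨n, rfl⟩ := sameCycle_iff_nat.mp h
  clear h
  induction n generalizing s with
  | zero => exact Equiv.Perm.SameCycle.refl _ _
  | succ k ih =>
    rw [pow_succ, Perm.mul_apply]
    have hs' := splice_ne hpq hne hs1 hs2
    exact Equiv.Perm.SameCycle.trans (sameCycle_splice_step hpq hs2) (ih hs'.1 hs'.2)

lemma sameCycle_splice_from (hpq : σ p = q) (hne : p ≠ q) (hq2 : σ q ≠ p)
    {s t : α} (hs1 : s ≠ p) (hs2 : s ≠ q)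
    (ht1 : t ≠ p) (ht2 : t ≠ q) (h : σ.SameCycle s t) :
    (splice σ p q).SameCycle s t := by
  obtain ⟨n, hn⟩ := sameCycle_iff_nat.mp h
  clear h
  induction n using Nat.strong_induction_on generalizing s with
  | _ n ih =>
    match n, hn with
    | 0, hn => exact ⟨0, by simpa using hn⟩
    | (k+1), hn =>
      by_cases hu : σ s = p
      · -- s = σ⁻¹ p, skip three steps
        have hs3 : σ q ≠ q := fun h => hne (σ.injective (hpq.trans h.symm))
        have hsp : s = σ⁻¹ p := by rw [← hu, Perm.inv_apply_self]
        match k, hn with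
        | 0, hn =>
          exfalso
          rw [zero_add, pow_one] at hn
          exact ht1 (by rw [← hn, hu])
        | 1, hn =>
          exfalso
          rw [pow_succ, Perm.mul_apply, pow_one] at hn
          exact ht2 (by rw [← hn, hu, hpq])
        | (k'+2), hn =>
          have e3 : (σ ^ 3) s = σ (σ (σ s)) := by
            simp [pow_succ, Perm.mul_apply]
          have h3 : (σ ^ (k'+3)) s = (σ ^ k') (σ (σ (σ s))) := by
            rw [pow_add, Perm.mul_apply, e3]
          rw [hu, hpq] at h3
          have step : (splice σ p q) s = σ q := by rw [hsp, splice_pre]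
          have tail : (splice σ p q).SameCycle (σ q) t := by
            refine ih k' (by omega) hq2 hs3 ?_
            rw [← h3]
            exact hn
          exact Equiv.Perm.SameCycle.trans ⟨1, by simpa using step⟩ tail
      · have hu2 : σ s ≠ q := fun h => hs1 (σ.injective (h.trans hpq.symm))
        have hsp : s ≠ σ⁻¹ p := fun h => hu (by rw [h, Perm.apply_inv_self])
        have step : (splice σ p q) s = σ s := splice_apply_of_ne hsp hs2
        have tail : (splice σ p q).SameCycle (σ s) t := by
          refine ih k (by omega) hu hu2 ?_
          rw [← hn, pow_succ, Perm.mul_apply]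
        exact Equiv.Perm.SameCycle.trans ⟨1, by simpa using step⟩ tail

lemma orbSet_splice (hpq : σ p = q) (hne : p ≠ q) (hq2 : σ q ≠ p)
    {s : α} (hs1 : s ≠ p) (hs2 : s ≠ q) :
    orbSet (splice σ p q) s = orbSet σ s \ {p, q} := by
  ext y
  simp only [mem_orbSet, Set.mem_diff, Set.mem_insert_iff, Set.mem_singleton_iff]
  constructor
  · intro h
    obtain ⟨n, rfl⟩ := sameCycle_iff_nat.mp h
    have hy := splice_pow_ne hpq hne hs1 hs2 n
    exact ⟨sameCycle_splice_to hpq hne hs1 hs2 h, fun hc => hc.elim hy.1 hy.2⟩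
  · rintro ⟨h, hy⟩
    push_neg at hy
    exact sameCycle_splice_from hpq hne hq2 hs1 hs2 hy.1 hy.2 h

end Splice

section SubtypeTransfer

variable {P : α → Prop} [DecidablePred P]

lemma sameCycle_subtypePerm {f : Perm α} (hf : ∀ x, P x ↔ P (f x)) (a b : {x // P x}) :
    (f.subtypePerm (fun x => (hf x).symm)).SameCycle a b ↔ f.SameCycle a.val b.val := by
  constructor
  · rintro ⟨i, hi⟩
    refine ⟨i, ?_⟩
    rw [subtypePerm_zpow] at hi
    exact congrArg Subtype.val hi
  · rintro ⟨i, hi⟩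
    refine ⟨i, ?_⟩
    rw [subtypePerm_zpow]
    exact Subtype.ext hi

lemma orbSet_subtypePerm {f : Perm α} (hf : ∀ x, P x ↔ P (f x)) (a : {x // P x}) :
    Subtype.val '' orbSet (f.subtypePerm (fun x => (hf x).symm)) a = orbSet f a.val ∩ {x | P x} := by
  ext y
  constructor
  · rintro ⟨b, hb, rfl⟩
    exact ⟨(sameCycle_subtypePerm hf a b).1 hb, b.2⟩
  · rintro ⟨h1, h2⟩
    exact ⟨⟨y, h2⟩, (sameCycle_subtypePerm hf a ⟨y, h2⟩).2 h1, rfl⟩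

lemma ncard_orbSet_subtypePerm {f : Perm α} (hf : ∀ x, P x ↔ P (f x)) (a : {x // P x}) :
    (orbSet (f.subtypePerm (fun x => (hf x).symm)) a).ncard = (orbSet f a.val ∩ {x | P x}).ncard := by
  rw [← orbSet_subtypePerm hf a, Set.ncard_image_of_injective _ Subtype.val_injective]

end SubtypeTransfer

lemma dihedral_orbit_half {β : Type} [Fintype β] [DecidableEq β] (σa σb : Perm β)
    (ha : σa * σa = 1) (hb : σb * σb = 1)
    (ht : ∀ x y : β, ∃ g ∈ Subgroup.closure {σa, σb}, g x = y) (x : β) :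
    Fintype.card β ≤ 2 * (orbSet (σa * σb)⁻¹ x).ncard := by
  set ρ : Perm β := (σa * σb)⁻¹ with hρ
  have hainv : σa⁻¹ = σa := inv_eq_of_mul_eq_one_right ha
  have hbinv : σb⁻¹ = σb := inv_eq_of_mul_eq_one_right hb
  have haa : ∀ y, σa (σa y) = y := fun y => by
    rw [← Perm.mul_apply, ha, Perm.one_apply]
  have hρba : ρ = σb * σa := by rw [hρ, mul_inv_rev, hainv, hbinv]
  set O : Set β := orbSet ρ x with hO
  have hOρ : ∀ y ∈ O, ρ y ∈ O := fun y hy =>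
    Equiv.Perm.SameCycle.trans hy ⟨1, by simp⟩
  have hOρ' : ∀ y ∈ O, ρ⁻¹ y ∈ O := fun y hy =>
    Equiv.Perm.SameCycle.trans hy ⟨-1, by simp⟩
  set U : Set β := O ∪ σa '' O with hU
  have hUfin : U.Finite := Set.toFinite U
  have Pa : ∀ y ∈ U, σa y ∈ U := by
    rintro y (hy | ⟨o, ho, rfl⟩)
    · exact Or.inr ⟨y, hy, rfl⟩
    · exact Or.inl (by rwa [haa])
  have Pb : ∀ y ∈ U, σb y ∈ U := by
    rintro y (hy | ⟨o, ho, rfl⟩)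
    · refine Or.inr ⟨ρ⁻¹ y, hOρ' y hy, ?_⟩
      rw [hρ, inv_inv, Perm.mul_apply, haa]
    · refine Or.inl ?_
      have hxx : σb (σa o) = ρ o := by rw [hρba, Perm.mul_apply]
      rw [hxx]
      exact hOρ o ho
  have key : ∀ g ∈ Subgroup.closure ({σa, σb} : Set (Perm β)), ∀ y ∈ U, g y ∈ U := by
    intro g hg
    induction hg using Subgroup.closure_induction with
    | mem w hw =>
      have hw2 : w = σa ∨ w = σb := by simpa using hw
      rcases hw2 with h | h <;> rw [h]
      · exact Pa
      · exact Pb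
    | one => intro y hy; simpa using hy
    | mul a b _ _ pa pb =>
      intro y hy
      rw [Perm.mul_apply]
      exact pa _ (pb _ hy)
    | inv a _ pa =>
      intro y hy
      have himg : a '' U = U := by
        refine Set.eq_of_subset_of_ncard_le ?_ ?_ hUfin
        · rintro _ ⟨u, hu, rfl⟩; exact pa u hu
        · rw [Set.ncard_image_of_injective _ a.injective]
      rw [← himg] at hy
      rcases hy with ⟨u, hu, rfl⟩
      rwa [Perm.inv_apply_self]
  have hUuniv : U = Set.univ := by
    apply Set.eq_univ_of_forall
    intro y
    obtain ⟨g, hg, hgx⟩ := ht x y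
    have := key g hg x (Or.inl (Equiv.Perm.SameCycle.refl _ _))
    rwa [hgx] at this
  have hcard : Fintype.card β = U.ncard := by
    rw [hUuniv, Set.ncard_univ, Nat.card_eq_fintype_card]
  calc Fintype.card β = U.ncard := hcard
    _ ≤ O.ncard + (σa '' O).ncard := Set.ncard_union_le _ _
    _ = O.ncard + O.ncard := by rw [Set.ncard_image_of_injective _ σa.injective]
    _ = 2 * O.ncard := by ring

lemma orbSet_eq_of_sameCycle {σ : Perm α} {a b : α} (h : σ.SameCycle a b) :
    orbSet σ a = orbSet σ b := by
  ext y
  exact ⟨fun hy => Equiv.Perm.SameCycle.trans (Equiv.Perm.SameCycle.symm h) hy,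
    fun hy => Equiv.Perm.SameCycle.trans h hy⟩

lemma key : ∀ (N : ℕ) (α : Type) (iF : Fintype α) (iD : DecidableEq α),
    Fintype.card α = N → ∀ (σ1 σ2 : Perm α) (x0 d : α),
    σ1 * σ1 = 1 → (∀ x, σ1 x ≠ x) →
    σ2 x0 = x0 → (∀ y, σ2 y = y → y = x0) →
    σ2 d ≠ d → σ2 (σ2 d) ≠ d → σ2 (σ2 (σ2 d)) = d →
    (∀ y, y ≠ x0 → y ≠ d → y ≠ σ2 d → y ≠ σ2 (σ2 d) → σ2 (σ2 y) = y) →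
    (∀ x y : α, ∃ g ∈ Subgroup.closure {σ1, σ2}, g x = y) →
    N < 2 * (orbSet (σ1 * σ2)⁻¹ x0).ncard := by
  intro N
  induction N using Nat.strong_induction_on with
  | _ N IH =>
  intro α iF iD hcard σ1 σ2 x0 d h1sq h1f hx0 hx0u hd1 hd2 hd3 h2two htrans
  have h1inv : σ1⁻¹ = σ1 := inv_eq_of_mul_eq_one_right h1sq
  have h1aa : ∀ y, σ1 (σ1 y) = y := fun y => by
    rw [← Perm.mul_apply, h1sq, Perm.one_apply]
  set σ3 : Perm α := (σ1 * σ2)⁻¹ with hσ3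
  have hσ3inv : ∀ t, σ3⁻¹ t = σ1 (σ2 t) := fun t => by
    rw [hσ3, inv_inv, Perm.mul_apply]
  set z : α := σ1 x0 with hz
  have hσ1z : σ1 z = x0 := h1aa x0
  have hzx0 : z ≠ x0 := fun h => h1f x0 (by rw [← hz, h])
  have hσ3z : σ3 z = x0 := by
    rw [hσ3]
    rw [Perm.inv_eq_iff_eq]
    rw [Perm.mul_apply, hx0]
  set w : α := σ3 x0 with hw
  have hσ2w : σ2 w = z := by
    have h' : σ1 (σ2 w) = x0 := by
      rw [← Perm.mul_apply]
      rw [hw, hσ3]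
      exact Perm.apply_inv_self _ _
    have := congrArg σ1 h'
    rwa [h1aa] at this
  have hwx0 : w ≠ x0 := fun h => hzx0 (by rw [← hσ2w, h, hx0])
  have hwz : w ≠ z := fun h =>
    hzx0 (hx0u z (by rw [← h, hσ2w]; exact h.symm))
  have hq2 : σ3 x0 ≠ z := by rw [← hw]; exact hwz
  have hwP : w ≠ z ∧ w ≠ x0 := ⟨hwz, hwx0⟩
  -- the spliced permutation
  set ρ : Perm α := splice σ3 z x0 with hρdef
  have hρz : ρ z = x0 := splice_p hσ3z hzx0
  have hρx0 : ρ x0 = z := splice_q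
  have hρP : ∀ y, (y ≠ z ∧ y ≠ x0) ↔ (ρ y ≠ z ∧ ρ y ≠ x0) := by
    intro y
    constructor
    · intro hy
      exact splice_ne hσ3z hzx0 hy.1 hy.2
    · intro hy
      constructor
      · intro h; apply hy.2; rw [h]; exact hρz
      · intro h; apply hy.1; rw [h]; exact hρx0
  have h1P : ∀ y, (y ≠ z ∧ y ≠ x0) ↔ (σ1 y ≠ z ∧ σ1 y ≠ x0) := by
    intro y
    have e1 : σ1 y = z ↔ y = x0 :=
      ⟨fun h => σ1.injective (by rw [h, hz]), fun h => by rw [h, hz]⟩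
    have e2 : σ1 y = x0 ↔ y = z :=
      ⟨fun h => σ1.injective (by rw [h, hσ1z]), fun h => by rw [h, hσ1z]⟩
    constructor
    · intro hy
      exact ⟨fun h => hy.2 (e1.mp h), fun h => hy.1 (e2.mp h)⟩
    · intro hy
      exact ⟨fun h => hy.2 (e2.mpr h), fun h => hy.1 (e1.mpr h)⟩
  set σ1' : Perm {y // y ≠ z ∧ y ≠ x0} := σ1.subtypePerm (fun y => (h1P y).symm) with hσ1'
  set σ3' : Perm {y // y ≠ z ∧ y ≠ x0} := ρ.subtypePerm (fun y => (hρP y).symm) with hσ3'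
  set σ2' : Perm {y // y ≠ z ∧ y ≠ x0} := σ1'⁻¹ * σ3'⁻¹ with hσ2'
  have hprod' : (σ1' * σ2')⁻¹ = σ3' := by
    rw [hσ2']
    group
  have h1sq' : σ1' * σ1' = 1 := by
    ext a
    simp only [Perm.mul_apply, Perm.one_apply]
    exact h1aa a.val
  have h1f' : ∀ a : {y // y ≠ z ∧ y ≠ x0}, σ1' a ≠ a := by
    intro a h
    exact h1f a.val (congrArg Subtype.val h)
  -- value computations for σ2'
  have hval1 : ∀ a : {y // y ≠ z ∧ y ≠ x0}, (σ1' a).val = σ1 a.val := fun a => rfl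
  have hσ3invw : σ3⁻¹ w = x0 := by
    rw [hw, Perm.inv_apply_self]
  have hρinv : ∀ t, t ≠ z → t ≠ w → ρ⁻¹ t = σ3⁻¹ t := by
    intro t htz htw
    rw [hρdef]
    show (splice σ3 z x0)⁻¹ t = σ3⁻¹ t
    rw [splice, mul_inv_rev, Perm.mul_apply, Equiv.swap_inv]
    refine Equiv.swap_apply_of_ne_of_ne ?_ ?_
    · intro h
      exact htz (σ3⁻¹.injective h)
    · intro h
      apply htw
      have := congrArg σ3 h
      rwa [Perm.apply_inv_self, ← hw] at this
  have hρinvw : ρ⁻¹ w = σ3⁻¹ z := by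
    rw [hρdef]
    show (splice σ3 z x0)⁻¹ w = σ3⁻¹ z
    rw [splice, mul_inv_rev, Perm.mul_apply, Equiv.swap_inv, hσ3invw,
      Equiv.swap_apply_right]
  have hval2 : ∀ a : {y // y ≠ z ∧ y ≠ x0}, a.val ≠ w → (σ2' a).val = σ2 a.val := by
    intro a haw
    have e : (σ2' a).val = σ1⁻¹ (ρ⁻¹ a.val) := rfl
    rw [e, h1inv, hρinv a.val a.2.1 haw, hσ3inv, h1aa]
  have hval2w : ∀ a : {y // y ≠ z ∧ y ≠ x0}, a.val = w → (σ2' a).val = σ2 z := by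
    intro a haw
    have e : (σ2' a).val = σ1⁻¹ (ρ⁻¹ a.val) := rfl
    rw [e, h1inv, haw, hρinvw, hσ3inv, h1aa]
  -- basic non-membership facts
  have hne_x0 : ∀ t, t ≠ x0 → σ2 t ≠ x0 := fun t ht h =>
    ht (σ2.injective (by rw [h, hx0]))
  have hne_z : ∀ t, t ≠ w → σ2 t ≠ z := fun t ht h =>
    ht (σ2.injective (by rw [h, hσ2w]))
  have hne_selfz : σ2 z ≠ z := fun h => hzx0 (hx0u z h)
  -- transitivity of the trimmed data
  have htrans' : ∀ a b : {y // y ≠ z ∧ y ≠ x0},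
      ∃ g ∈ Subgroup.closure {σ1', σ2'}, g a = b := by
    set f : α → {y // y ≠ z ∧ y ≠ x0} :=
      fun t => if h : t ≠ z ∧ t ≠ x0 then ⟨t, h⟩ else ⟨w, hwP⟩ with hfdef
    have hfP : ∀ t (h : t ≠ z ∧ t ≠ x0), f t = ⟨t, h⟩ := fun t h => dif_pos h
    have hfz : f z = ⟨w, hwP⟩ := dif_neg (by simp)
    have hfx0 : f x0 = ⟨w, hwP⟩ := dif_neg (by simp)
    have claim : ∀ g ∈ Subgroup.closure ({σ1, σ2} : Set (Perm α)), ∀ t : α,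
        ∃ g' ∈ Subgroup.closure ({σ1', σ2'} : Set (Perm {y // y ≠ z ∧ y ≠ x0})),
          g' (f t) = f (g t) := by
      intro g hg
      induction hg using Subgroup.closure_induction with
      | mem v hv =>
        have hv2 : v = σ1 ∨ v = σ2 := by simpa using hv
        rcases hv2 with h | h <;> rw [h] <;> intro t
        · -- σ1 generator
          by_cases ht1 : t = z
          · refine ⟨1, one_mem _, ?_⟩
            rw [ht1, hfz, hσ1z, hfx0, Perm.one_apply]
          by_cases ht2 : t = x0
          · refine ⟨1, one_mem _, ?_⟩
            rw [ht2, hfx0, ← hz, hfz, Perm.one_apply]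
          · refine ⟨σ1', Subgroup.subset_closure (Or.inl rfl), ?_⟩
            rw [hfP t ⟨ht1, ht2⟩, hfP (σ1 t) ((h1P t).mp ⟨ht1, ht2⟩)]
            rfl
        · -- σ2 generator
          by_cases ht2 : t = x0
          · refine ⟨1, one_mem _, ?_⟩
            rw [ht2, hx0, hfx0, Perm.one_apply]
          by_cases ht1 : t = z
          · refine ⟨σ2', Subgroup.subset_closure (Or.inr rfl), ?_⟩
            have hm : σ2 z ≠ z ∧ σ2 z ≠ x0 := ⟨hne_selfz, hne_x0 z hzx0⟩
            rw [ht1, hfz, hfP (σ2 z) hm]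
            exact Subtype.ext (hval2w ⟨w, hwP⟩ rfl)
          by_cases htw : t = w
          · refine ⟨1, one_mem _, ?_⟩
            rw [htw, hσ2w, hfz, hfP w hwP, Perm.one_apply]
          · refine ⟨σ2', Subgroup.subset_closure (Or.inr rfl), ?_⟩
            have hm : σ2 t ≠ z ∧ σ2 t ≠ x0 :=
              ⟨hne_z t htw, hne_x0 t ht2⟩
            rw [hfP t ⟨ht1, ht2⟩, hfP (σ2 t) hm]
            exact Subtype.ext (hval2 ⟨t, ht1, ht2⟩ htw)
      | one =>
        intro t
        exact ⟨1, one_mem _, by simp⟩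
      | mul x y _ _ px py =>
        intro t
        obtain ⟨gy, hgy, ey⟩ := py t
        obtain ⟨gx, hgx, ex⟩ := px (y t)
        refine ⟨gx * gy, mul_mem hgx hgy, ?_⟩
        rw [Perm.mul_apply, ey, ex, Perm.mul_apply]
      | inv x _ px =>
        intro t
        obtain ⟨g', hg', e⟩ := px (x⁻¹ t)
        refine ⟨g'⁻¹, inv_mem hg', ?_⟩
        rw [Perm.apply_inv_self] at e
        rw [← e, Perm.inv_apply_self]
    intro a b
    obtain ⟨g, hg, hgab⟩ := htrans a.val b.val
    obtain ⟨g', hg', e⟩ := claim g hg a.val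
    rw [hgab, hfP a.val a.2, hfP b.val b.2] at e
    exact ⟨g', hg', e⟩
  -- cardinality of the subtype
  have hN1 : 1 ≤ N := by
    rw [← hcard]
    exact Fintype.card_pos_iff.mpr ⟨x0⟩
  have hcard' : Fintype.card {y // y ≠ z ∧ y ≠ x0} = N - 2 := by
    have e1 : Fintype.card {y // y ≠ z ∧ y ≠ x0} =
        Fintype.card {y : α // ¬(y = z ∨ y = x0)} :=
      Fintype.card_congr (Equiv.subtypeEquivRight (fun y => not_or.symm))
    have e2 : Fintype.card {y : α // y = z ∨ y = x0} = 2 := by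
      rw [Fintype.card_subtype]
      have efil : (Finset.univ.filter (fun y : α => y = z ∨ y = x0)) = {z, x0} := by
        ext y
        simp [Finset.mem_filter, Finset.mem_insert, Finset.mem_singleton]
      rw [efil, Finset.card_insert_of_notMem (by simpa using hzx0),
        Finset.card_singleton]
    have e3 := Fintype.card_subtype_compl (fun y : α => y = z ∨ y = x0)
    rw [e1, e3, e2, hcard]
  -- orbit bookkeeping
  set K := (orbSet σ3 x0).ncard with hK
  have horbw : orbSet σ3 w = orbSet σ3 x0 := orbSet_eq_of_sameCycle
    (Equiv.Perm.SameCycle.symm ⟨1, by simp [hw]⟩)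
  have hzorb : z ∈ orbSet σ3 x0 := ⟨-1, by simp [← hσ3z]⟩
  have hx0orb : x0 ∈ orbSet σ3 x0 := Equiv.Perm.SameCycle.refl _ _
  have hworb : w ∈ orbSet σ3 x0 := ⟨1, by simp [hw]⟩
  have horb' : (orbSet σ3' ⟨w, hwP⟩).ncard = K - 2 := by
    have t1 : (orbSet σ3' ⟨w, hwP⟩).ncard
        = (orbSet ρ w ∩ {y | y ≠ z ∧ y ≠ x0}).ncard :=
      ncard_orbSet_subtypePerm hρP ⟨w, hwP⟩
    have t2 : orbSet ρ w = orbSet σ3 x0 \ {z, x0} := by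
      rw [hρdef, orbSet_splice hσ3z hzx0 hq2 hwz hwx0, horbw]
    have t3 : orbSet ρ w ∩ {y | y ≠ z ∧ y ≠ x0} = orbSet ρ w := by
      apply Set.inter_eq_self_of_subset_left
      rw [t2]
      rintro y ⟨_, hy2⟩
      simp only [Set.mem_insert_iff, Set.mem_singleton_iff] at hy2
      push_neg at hy2
      exact hy2
    have hsub : ({z, x0} : Set α) ⊆ orbSet σ3 x0 := by
      rw [Set.insert_subset_iff, Set.singleton_subset_iff]
      exact ⟨hzorb, hx0orb⟩
    rw [t1, t3, t2, Set.ncard_diff hsub, Set.ncard_pair hzx0]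
  have hK3 : 3 ≤ K := by
    have hsub : ({x0, z, w} : Set α) ⊆ orbSet σ3 x0 := by
      intro y hy
      simp only [Set.mem_insert_iff, Set.mem_singleton_iff] at hy
      rcases hy with rfl | rfl | rfl
      exacts [hx0orb, hzorb, hworb]
    have h3 : ({x0, z, w} : Set α).ncard = 3 := by
      rw [Set.ncard_insert_of_notMem, Set.ncard_pair (fun h => hwz h.symm)]
      simp only [Set.mem_insert_iff, Set.mem_singleton_iff]
      push_neg
      exact ⟨fun h => hzx0 h.symm, fun h => hwx0 h.symm⟩
    calc 3 = ({x0, z, w} : Set α).ncard := h3.symm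
      _ ≤ K := Set.ncard_le_ncard hsub (Set.toFinite _)
  -- case analysis
  by_cases hB : z = d ∨ z = σ2 d ∨ z = σ2 (σ2 d)
  · -- case B : z lies in the 3-cycle; trimmed σ2' is an involution
    have hc3 : σ2 (σ2 (σ2 z)) = z := by
      rcases hB with h | h | h
      · rw [h, hd3]
      · rw [h, hd3]
      · rw [h, hd3]
    have htrip : ∀ y, y ≠ x0 → y ≠ z → y ≠ σ2 z → y ≠ σ2 (σ2 z) → σ2 (σ2 y) = y := by
      intro y hy0 hy1 hy2 hy3
      rcases hB with h | h | h
      · exact h2two y hy0 (by rw [← h]; exact hy1) (by rw [← h]; exact hy2)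
          (by rw [← h]; exact hy3)
      · have e0 : σ2 (σ2 z) = d := by rw [h, hd3]
        have e1 : σ2 z = σ2 (σ2 d) := by rw [h]
        exact h2two y hy0 (by rw [← e0]; exact hy3) (by rw [← h]; exact hy1)
          (by rw [← e1]; exact hy2)
      · have e1 : σ2 z = d := by rw [h, hd3]
        have e2 : σ2 (σ2 z) = σ2 d := by rw [h, hd3]
        exact h2two y hy0 (by rw [← e1]; exact hy2) (by rw [← e2]; exact hy3)
          (by rw [← h]; exact hy1)
    have hw2 : σ2 (σ2 z) = w := by
      apply σ2.injective
      rw [hc3, hσ2w]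
    have hσ2zw : σ2 z ≠ w := by
      intro h
      apply hne_selfz
      rw [← hw2] at h
      exact (σ2.injective h).symm
    have h2sq' : σ2' * σ2' = 1 := by
      ext a
      simp only [Perm.mul_apply, Perm.one_apply]
      by_cases haw : a.val = w
      · have e1 : (σ2' a).val = σ2 z := hval2w a haw
        have e2 : (σ2' (σ2' a)).val = σ2 (σ2 z) := by
          rw [hval2 (σ2' a) (by rw [e1]; exact hσ2zw), e1]
        rw [e2, hw2, haw]
      · have e1 : (σ2' a).val = σ2 a.val := hval2 a haw
        by_cases hsw : σ2 a.val = w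
        · have hu : a.val = σ2 z := σ2.injective (by rw [hsw, hw2])
          have e2 : (σ2' (σ2' a)).val = σ2 z := by
            refine hval2w (σ2' a) ?_
            rw [e1, hsw]
          rw [e2, hu]
        · have e2 : (σ2' (σ2' a)).val = σ2 (σ2 a.val) := by
            rw [hval2 (σ2' a) (by rw [e1]; exact hsw), e1]
          rw [e2]
          refine htrip a.val a.2.2 a.2.1 ?_ ?_
          · intro h
            apply hsw
            rw [h, hw2]
          · intro h
            apply haw
            rw [h, hw2]
    have hdi := dihedral_orbit_half σ1' σ2' h1sq' h2sq' htrans' ⟨w, hwP⟩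
    rw [hprod', horb', hcard'] at hdi
    omega
  · -- case A : z lies in a 2-cycle of σ2
    push_neg at hB
    have hzz : σ2 (σ2 z) = z := h2two z hzx0 hB.1 hB.2.1 hB.2.2
    have hσ2z : σ2 z = w := σ2.injective (by rw [hσ2w, hzz])
    have hdz : d ≠ z := fun h => hB.1 h.symm
    have hdx0 : d ≠ x0 := fun h => hd1 (by rw [h, hx0])
    have hwd : w ≠ d := fun h => hB.2.1 (by rw [← h]; exact hσ2w.symm)
    have hwt1 : w ≠ σ2 d := fun h => hB.2.2 (by rw [← hσ2w, h])
    have hwt2 : w ≠ σ2 (σ2 d) := fun h => hB.1 (by rw [← hσ2w, h, hd3])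
    have hm1 : σ2 d ≠ z ∧ σ2 d ≠ x0 := ⟨fun h => hB.2.1 h.symm, hne_x0 d hdx0⟩
    have hm2 : σ2 (σ2 d) ≠ z ∧ σ2 (σ2 d) ≠ x0 :=
      ⟨fun h => hB.2.2 h.symm, hne_x0 _ hm1.2⟩
    have e1 : σ2' ⟨d, hdz, hdx0⟩ = ⟨σ2 d, hm1⟩ :=
      Subtype.ext (hval2 ⟨d, hdz, hdx0⟩ (fun h => hwd h.symm))
    have e2 : σ2' ⟨σ2 d, hm1⟩ = ⟨σ2 (σ2 d), hm2⟩ :=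
      Subtype.ext (hval2 ⟨σ2 d, hm1⟩ (fun h => hwt1 h.symm))
    have e3 : σ2' ⟨σ2 (σ2 d), hm2⟩ = ⟨d, hdz, hdx0⟩ := by
      refine Subtype.ext ?_
      have := hval2 ⟨σ2 (σ2 d), hm2⟩ (fun h => hwt2 h.symm)
      rw [this]
      exact hd3
    have c1 : σ2' ⟨w, hwP⟩ = ⟨w, hwP⟩ := by
      refine Subtype.ext ?_
      rw [hval2w ⟨w, hwP⟩ rfl, hσ2z]
    have c2 : ∀ b : {y // y ≠ z ∧ y ≠ x0}, σ2' b = b → b = ⟨w, hwP⟩ := by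
      intro b hb
      by_cases hbw : b.val = w
      · exact Subtype.ext hbw
      · exfalso
        have := hval2 b hbw
        rw [hb] at this
        exact b.2.2 (hx0u b.val this.symm)
    have c3 : σ2' ⟨d, hdz, hdx0⟩ ≠ ⟨d, hdz, hdx0⟩ := by
      rw [e1]
      intro h
      exact hd1 (congrArg Subtype.val h)
    have c4 : σ2' (σ2' ⟨d, hdz, hdx0⟩) ≠ ⟨d, hdz, hdx0⟩ := by
      rw [e1, e2]
      intro h
      exact hd2 (congrArg Subtype.val h)
    have c5 : σ2' (σ2' (σ2' ⟨d, hdz, hdx0⟩)) = ⟨d, hdz, hdx0⟩ := by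
      rw [e1, e2, e3]
    have c6 : ∀ b : {y // y ≠ z ∧ y ≠ x0}, b ≠ ⟨w, hwP⟩ → b ≠ ⟨d, hdz, hdx0⟩ →
        b ≠ σ2' ⟨d, hdz, hdx0⟩ → b ≠ σ2' (σ2' ⟨d, hdz, hdx0⟩) → σ2' (σ2' b) = b := by
      intro b hb0 hb1 hb2 hb3
      rw [e1] at hb2
      rw [e1, e2] at hb3
      have htw : b.val ≠ w := fun h => hb0 (Subtype.ext h)
      have htd : b.val ≠ d := fun h => hb1 (Subtype.ext h)
      have htd1 : b.val ≠ σ2 d := fun h => hb2 (Subtype.ext h)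
      have htd2 : b.val ≠ σ2 (σ2 d) := fun h => hb3 (Subtype.ext h)
      have eb1 : (σ2' b).val = σ2 b.val := hval2 b htw
      have hsw : σ2 b.val ≠ w := by
        intro h
        rw [← hσ2z] at h
        exact b.2.1 (σ2.injective h)
      refine Subtype.ext ?_
      rw [hval2 (σ2' b) (by rw [eb1]; exact hsw), eb1]
      exact h2two b.val b.2.2 htd htd1 htd2
    have hIH := IH (N - 2) (by omega) {y // y ≠ z ∧ y ≠ x0} inferInstance inferInstance hcard' σ1' σ2'
      ⟨w, hwP⟩ ⟨d, hdz, hdx0⟩ h1sq' h1f' c1 c2 c3 c4 c5 c6 htrans'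
    rw [hprod', horb'] at hIH
    omega
lemma cycleType_of_full_no_one {n : ℕ} {σ : Perm (Fin n)} {T : Multiset ℕ}
    (h : fullCycleType σ = T) (h1 : (1:ℕ) ∉ T) : σ.cycleType = T := by
  rw [fullCycleType] at h
  rcases Nat.eq_zero_or_pos (n - σ.cycleType.sum) with h0 | hpos
  · rwa [h0, Multiset.replicate_zero, add_zero] at h
  · exfalso
    apply h1
    rw [← h]
    exact Multiset.mem_add.mpr (Or.inr (Multiset.mem_replicate.mpr ⟨by omega, rfl⟩))

lemma cycleType_of_full_one {n r : ℕ} {σ : Perm (Fin n)}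
    (h : fullCycleType σ = 1 ::ₘ 3 ::ₘ Multiset.replicate r 2) :
    σ.cycleType = 3 ::ₘ Multiset.replicate r 2 := by
  rw [fullCycleType] at h
  have hc0 : Multiset.count 1 σ.cycleType = 0 :=
    Multiset.count_eq_zero.mpr (fun hm => by
      have := Equiv.Perm.two_le_of_mem_cycleType hm; omega)
  have hcount := congrArg (Multiset.count 1) h
  simp only [Multiset.count_add, Multiset.count_replicate, hc0, Multiset.count_cons] at hcount
  norm_num at hcount
  rw [hcount, Multiset.replicate_one] at h
  have h2 : σ.cycleType + {1} = (3 ::ₘ Multiset.replicate r 2) + {1} := by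
    rw [h, add_comm, Multiset.singleton_add]
  exact add_right_cancel h2

end LQ3

/-- For even `n ≥ 4`, the Laurent `(n,3)`-passport with `Π₁ = {2,…,2}`,
`Π₂ = {1,2,…,2,3}` (one part 1, `(n-4)/2` parts equal to 2, one part 3), and
`Π₃ = {n/2, n/2}` is not realizable. -/
theorem laurent_q3_not_realizable_one_two_three (n : ℕ) (hn : 4 ≤ n)
    (heven : Even n) :
    ¬ Realizable3 n (Multiset.replicate (n / 2) 2)
        (1 ::ₘ 3 ::ₘ Multiset.replicate ((n - 4) / 2) 2)
        {n / 2, n / 2} := by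
  rintro ⟨σ1, σ2, σ3, hf1, hf2, hf3, hprod, htrans0⟩
  obtain ⟨m, hm⟩ := heven
  have hm2 : 2 ≤ m := by omega
  have hn2 : n / 2 = m := by omega
  have hr : (n - 4) / 2 = m - 2 := by omega
  rw [hn2] at hf1 hf3
  rw [hr] at hf2
  -- σ1 facts
  have h1c : σ1.cycleType = Multiset.replicate m 2 :=
    LQ3.cycleType_of_full_no_one hf1 (fun hmem => by
      have := Multiset.eq_of_mem_replicate hmem; omega)
  have h1supp : σ1.support = Finset.univ := by
    apply Finset.eq_univ_of_card
    rw [← Equiv.Perm.sum_cycleType, h1c, Multiset.sum_replicate, smul_eq_mul,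
      Fintype.card_fin]
    omega
  have h1f : ∀ x, σ1 x ≠ x := fun x =>
    Equiv.Perm.mem_support.mp (by rw [h1supp]; exact Finset.mem_univ x)
  have h1sq : σ1 * σ1 = 1 := by
    have hord : orderOf σ1 ∣ 2 := by
      rw [← Equiv.Perm.lcm_cycleType, h1c]
      rw [Multiset.lcm_dvd]
      intro b hb
      rw [Multiset.eq_of_mem_replicate hb]
    have h2 := orderOf_dvd_iff_pow_eq_one.mp hord
    rwa [pow_two] at h2
  -- σ2 facts
  have h2c : σ2.cycleType = 3 ::ₘ Multiset.replicate (m - 2) 2 :=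
    LQ3.cycleType_of_full_one hf2
  have h2suppcard : σ2.support.card = n - 1 := by
    rw [← Equiv.Perm.sum_cycleType, h2c, Multiset.sum_cons, Multiset.sum_replicate,
      smul_eq_mul]
    omega
  have hcompl : σ2.supportᶜ.card = 1 := by
    rw [Finset.card_compl, h2suppcard, Fintype.card_fin]
    omega
  obtain ⟨x0, hx0c⟩ := Finset.card_eq_one.mp hcompl
  have hx0 : σ2 x0 = x0 := by
    have hmem : x0 ∈ σ2.supportᶜ := by
      rw [hx0c]; exact Finset.mem_singleton_self x0
    rw [Finset.mem_compl, Equiv.Perm.mem_support] at hmem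
    push_neg at hmem
    exact hmem
  have hx0u : ∀ y, σ2 y = y → y = x0 := by
    intro y hy
    have hmem : y ∈ σ2.supportᶜ :=
      Finset.mem_compl.mpr (Equiv.Perm.notMem_support.mpr hy)
    rw [hx0c, Finset.mem_singleton] at hmem
    exact hmem
  -- the 3-cycle of σ2
  have h3mem : (3:ℕ) ∈ σ2.cycleType := by
    rw [h2c]; exact Multiset.mem_cons_self _ _
  rw [Equiv.Perm.cycleType_def, Multiset.mem_map] at h3mem
  obtain ⟨τ, hτmem, hτ3⟩ := h3mem
  have hτfac : τ ∈ σ2.cycleFactorsFinset := hτmem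
  have hτ3' : τ.support.card = 3 := hτ3
  have hτsupp_ne : τ.support.Nonempty := by
    rw [← Finset.card_pos, hτ3']; omega
  obtain ⟨d, hd⟩ := hτsupp_ne
  have hτd : τ = σ2.cycleOf d := Equiv.Perm.cycle_is_cycleOf hd hτfac
  have hfaciff := Equiv.Perm.mem_cycleFactorsFinset_iff.mp hτfac
  have hd1 : σ2 d ≠ d := by
    have h1 : τ d ≠ d := Equiv.Perm.mem_support.mp hd
    rwa [hfaciff.2 d hd] at h1
  have hdsupp : d ∈ σ2.support := Equiv.Perm.mem_support.mpr hd1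
  have hord3 : orderOf τ = 3 := by rw [hfaciff.1.orderOf]; exact hτ3'
  have hd3 : σ2 (σ2 (σ2 d)) = d := by
    have hτpow : τ ^ 3 = 1 := by rw [← hord3]; exact pow_orderOf_eq_one τ
    have e : (σ2.cycleOf d ^ 3) d = (σ2 ^ 3) d := Equiv.Perm.cycleOf_pow_apply_self σ2 d 3
    rw [← hτd, hτpow, Equiv.Perm.one_apply] at e
    have e3 : (σ2 ^ 3) d = σ2 (σ2 (σ2 d)) := by
      simp [pow_succ, Equiv.Perm.mul_apply]
    rw [← e3, ← e]
  have hd2 : σ2 (σ2 d) ≠ d := by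
    intro h
    have h2 := congrArg σ2 h
    rw [hd3] at h2
    exact hd1 h2.symm
  -- support of τ is exactly the 3-cycle
  have hsc1 : σ2.SameCycle d (σ2 d) := Equiv.Perm.sameCycle_apply_right.mpr
    (Equiv.Perm.SameCycle.refl _ _)
  have hsc2 : σ2.SameCycle d (σ2 (σ2 d)) := Equiv.Perm.sameCycle_apply_right.mpr hsc1
  have hdd1 : d ≠ σ2 d := fun h => hd1 h.symm
  have hdd2 : d ≠ σ2 (σ2 d) := fun h => hd2 h.symm
  have hdd3 : σ2 d ≠ σ2 (σ2 d) := fun h => hd1 (σ2.injective h.symm)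
  have hsuppτ : ({d, σ2 d, σ2 (σ2 d)} : Finset (Fin n)) = τ.support := by
    apply Finset.eq_of_subset_of_card_le
    · intro y hy
      simp only [Finset.mem_insert, Finset.mem_singleton] at hy
      rw [hτd]
      rcases hy with rfl | rfl | rfl
      · exact Equiv.Perm.mem_support_cycleOf_iff.mpr ⟨Equiv.Perm.SameCycle.refl _ _, hdsupp⟩
      · exact Equiv.Perm.mem_support_cycleOf_iff.mpr ⟨hsc1, hdsupp⟩
      · exact Equiv.Perm.mem_support_cycleOf_iff.mpr ⟨hsc2, hdsupp⟩
    · rw [hτ3']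
      rw [Finset.card_insert_of_notMem (by simp [hdd1, hdd2]),
        Finset.card_pair hdd3]
  -- count of 3 in the cycle type is 1
  have hcnt3 : Multiset.count 3 σ2.cycleType = 1 := by
    rw [h2c]
    simp [Multiset.count_cons, Multiset.count_replicate]
  have h2two : ∀ y, y ≠ x0 → y ≠ d → y ≠ σ2 d → y ≠ σ2 (σ2 d) → σ2 (σ2 y) = y := by
    intro y hy0 hyd hyd1 hyd2
    have hyne : σ2 y ≠ y := by
      intro h
      exact hy0 (hx0u y h)
    have hysupp : y ∈ σ2.support := Equiv.Perm.mem_support.mpr hyne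
    have hyfac : σ2.cycleOf y ∈ σ2.cycleFactorsFinset :=
      Equiv.Perm.cycleOf_mem_cycleFactorsFinset_iff.mpr hysupp
    have hycard : (σ2.cycleOf y).support.card ∈ σ2.cycleType := by
      rw [Equiv.Perm.cycleType_def]
      exact Multiset.mem_map_of_mem _ hyfac
    rw [h2c, Multiset.mem_cons] at hycard
    rcases hycard with h3' | h2'
    · -- impossible: y would be in the 3-cycle
      exfalso
      have heq : σ2.cycleOf y = τ := by
        by_contra hne
        have h2le : (2:ℕ) ≤ Multiset.count 3 σ2.cycleType := by
          rw [Equiv.Perm.cycleType_def, Multiset.count_map]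
          have hsubf : ({σ2.cycleOf y, τ} : Finset (Equiv.Perm (Fin n)))
              ⊆ σ2.cycleFactorsFinset.filter
                (fun c => (3:ℕ) = (Finset.card ∘ Equiv.Perm.support) c) := by
            intro c hc
            simp only [Finset.mem_insert, Finset.mem_singleton] at hc
            rw [Finset.mem_filter]
            rcases hc with rfl | rfl
            · exact ⟨hyfac, h3'.symm⟩
            · exact ⟨hτfac, hτ3.symm⟩
          have hcard2 := Finset.card_le_card hsubf
          rw [Finset.card_pair hne] at hcard2
          calc (2:ℕ) ≤ (σ2.cycleFactorsFinset.filter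
                (fun c => (3:ℕ) = (Finset.card ∘ Equiv.Perm.support) c)).card := hcard2
            _ = Multiset.card (σ2.cycleFactorsFinset.val.filter
                (fun c => (3:ℕ) = (Finset.card ∘ Equiv.Perm.support) c)) := by
                rw [← Finset.filter_val]; rfl
        omega
      have hymem : y ∈ τ.support := by
        rw [← heq]
        exact Equiv.Perm.mem_support_cycleOf_iff.mpr ⟨Equiv.Perm.SameCycle.refl _ _, hysupp⟩
      rw [← hsuppτ] at hymem
      simp only [Finset.mem_insert, Finset.mem_singleton] at hymem
      rcases hymem with h | h | h
      exacts [hyd h, hyd1 h, hyd2 h]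
    · -- 2-cycle
      have hcyc : (σ2.cycleOf y).IsCycle := Equiv.Perm.isCycle_cycleOf σ2 hyne
      have hordy : orderOf (σ2.cycleOf y) = 2 := by
        rw [hcyc.orderOf]; exact Multiset.eq_of_mem_replicate h2'
      have hcpow : σ2.cycleOf y ^ 2 = 1 := by
        rw [← hordy]; exact pow_orderOf_eq_one _
      have e : (σ2.cycleOf y ^ 2) y = (σ2 ^ 2) y := Equiv.Perm.cycleOf_pow_apply_self σ2 y 2
      rw [hcpow, Equiv.Perm.one_apply] at e
      have e2 : (σ2 ^ 2) y = σ2 (σ2 y) := by simp [pow_succ, Equiv.Perm.mul_apply]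
      rw [← e2, ← e]
  -- σ3 facts
  have hσ3eq : σ3 = (σ1 * σ2)⁻¹ := eq_inv_of_mul_eq_one_right hprod
  have h3c : σ3.cycleType = {m, m} :=
    LQ3.cycleType_of_full_no_one hf3 (by
      intro hmem
      simp only [Multiset.insert_eq_cons, Multiset.mem_cons, Multiset.mem_singleton] at hmem
      omega)
  have h3supp : σ3.support = Finset.univ := by
    apply Finset.eq_univ_of_card
    rw [← Equiv.Perm.sum_cycleType, h3c, Fintype.card_fin]
    simp only [Multiset.insert_eq_cons, Multiset.sum_cons, Multiset.sum_singleton]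
    omega
  have hx0s3 : x0 ∈ σ3.support := by rw [h3supp]; exact Finset.mem_univ x0
  -- the orbit of x0 under σ3 has size m
  have horb : (LQ3.orbSet σ3 x0).ncard = m := by
    have hset : LQ3.orbSet σ3 x0 = ↑((σ3.cycleOf x0).support) := by
      ext y
      constructor
      · intro h
        exact Finset.mem_coe.mpr
          (Equiv.Perm.mem_support_cycleOf_iff.mpr ⟨h, hx0s3⟩)
      · intro h
        exact (Equiv.Perm.mem_support_cycleOf_iff.mp (Finset.mem_coe.mp h)).1
    rw [hset, Set.ncard_coe_finset]
    have hfac : σ3.cycleOf x0 ∈ σ3.cycleFactorsFinset :=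
      Equiv.Perm.cycleOf_mem_cycleFactorsFinset_iff.mpr hx0s3
    have hmem : (σ3.cycleOf x0).support.card ∈ σ3.cycleType := by
      rw [Equiv.Perm.cycleType_def]
      exact Multiset.mem_map_of_mem _ hfac
    rw [h3c] at hmem
    simp only [Multiset.insert_eq_cons, Multiset.mem_cons, Multiset.mem_singleton] at hmem
    rcases hmem with h | h
    exacts [h, h]
  -- transitivity with generators σ1, σ2
  have htrans : ∀ x y : Fin n, ∃ g ∈ Subgroup.closure {σ1, σ2}, g x = y := by
    intro x y
    obtain ⟨g, hg, hgxy⟩ := htrans0 x y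
    refine ⟨g, ?_, hgxy⟩
    have hle : Subgroup.closure {σ1, σ2, σ3} ≤ Subgroup.closure {σ1, σ2} := by
      apply Subgroup.closure_le _ |>.mpr
      intro v hv
      simp only [Set.mem_insert_iff, Set.mem_singleton_iff] at hv
      rcases hv with rfl | rfl | rfl
      · exact Subgroup.subset_closure (Or.inl rfl)
      · exact Subgroup.subset_closure (Or.inr rfl)
      · rw [hσ3eq]
        exact inv_mem (mul_mem (Subgroup.subset_closure (Or.inl rfl))
          (Subgroup.subset_closure (Or.inr rfl)))
    exact hle hg
  -- apply the key lemma
  have hkey := LQ3.key n (Fin n) inferInstance inferInstance (Fintype.card_fin n)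
    σ1 σ2 x0 d h1sq h1f hx0 hx0u hd1 hd2 hd3 h2two htrans
  rw [← hσ3eq] at hkey
  rw [horb] at hkey
  omega
end

section
/- The Laurent (12,3)-passport with Π_1 = {2,2,2,2,2,2}, Π_2 = {1,1,1,3,3,3}, and Π_3 = {6,6} is not realizable. -/
/-! ### Computational core -/

/-- Inverse of the canonical permutation `(0 1 2 3 4 5)(6 7 8 9 10 11)`, on `ℕ`. -/
def cInvN (x : Nat) : Nat :=
  if x = 0 then 5 else if x = 6 then 11 else x - 1

/-- Apply a list of unordered pairs (a matching) to a point. -/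
def appM (m : List (Nat × Nat)) (x : Nat) : Nat :=
  match m with
  | [] => x
  | (a, b) :: t => if x = a then b else if x = b then a else appM t x

def rhoM (m : List (Nat × Nat)) (x : Nat) : Nat := appM m (cInvN x)

def l12 : List Nat := [0,1,2,3,4,5,6,7,8,9,10,11]

def checkB (m : List (Nat × Nat)) : Bool :=
  !((l12.all fun i => rhoM m (rhoM m (rhoM m i)) == i) &&
    (l12.any fun i => decide (i < 6) && decide (6 ≤ appM m i)) &&
    (l12.any fun i => rhoM m i == i))

/-- Check `checkB` on all perfect matchings of `t` (extended by `acc`). -/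
def allOK : Nat → List (Nat × Nat) → List Nat → Bool
  | _, acc, [] => checkB acc
  | 0, _, _ :: _ => true
  | f+1, acc, h :: t => t.all fun y => allOK f ((h, y) :: acc) (t.erase y)

set_option maxRecDepth 100000 in
set_option maxHeartbeats 4000000 in
theorem key : allOK 12 [] l12 = true := by decide

theorem allOK_sound : ∀ (f : Nat) (t : List Nat) (acc : List (Nat × Nat)),
    t.length ≤ f → t.Nodup →
    allOK f acc t = true →
    ∀ g : Nat → Nat, (∀ x ∈ t, g x ∈ t ∧ g x ≠ x ∧ g (g x) = x) →
    ∃ m : List (Nat × Nat), checkB m = true ∧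
      ∀ x, appM m x = if x ∈ t then g x else appM acc x := by
  intro f
  induction f with
  | zero =>
    intro t acc hlen _ hOK g _
    have ht : t = [] := List.eq_nil_of_length_eq_zero (Nat.le_zero.mp hlen)
    subst ht
    exact ⟨acc, hOK, fun x => by simp⟩
  | succ f ih =>
    intro t acc hlen hnd hOK g hg
    match t with
    | [] => exact ⟨acc, hOK, fun x => by simp⟩
    | h :: t' =>
      obtain ⟨hy_mem, hy_ne, hy_inv⟩ := hg h (List.mem_cons_self (a := h) (l := t'))
      set y := g h with hy_def
      have hy_t' : y ∈ t' := by
        rcases List.mem_cons.mp hy_mem with h1 | h1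
        · exact absurd h1 hy_ne
        · exact h1
      have hOK' : allOK f ((h, y) :: acc) (t'.erase y) = true := by
        simp only [allOK, List.all_eq_true] at hOK
        exact hOK y hy_t'
      have hnd' : t'.Nodup := (List.nodup_cons.mp hnd).2
      have hh_not : h ∉ t' := (List.nodup_cons.mp hnd).1
      have hlen' : (t'.erase y).length ≤ f := by
        have := List.length_erase_le (a := y) (l := t')
        have hl : t'.length ≤ f := Nat.succ_le_succ_iff.mp hlen
        omega
      have hg' : ∀ x ∈ t'.erase y, g x ∈ t'.erase y ∧ g x ≠ x ∧ g (g x) = x := by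
        intro x hx
        have hx_ne_y : x ≠ y := ((List.Nodup.mem_erase_iff hnd').mp hx).1
        have hx_t' : x ∈ t' := ((List.Nodup.mem_erase_iff hnd').mp hx).2
        obtain ⟨hgx_mem, hgx_ne, hgx_inv⟩ := hg x (List.mem_cons_of_mem h hx_t')
        have hgx_ne_h : g x ≠ h := by
          intro hc
          apply hx_ne_y
          rw [hy_def, ← hc, hgx_inv]
        have hgx_t' : g x ∈ t' := by
          rcases List.mem_cons.mp hgx_mem with h1 | h1
          · exact absurd h1 hgx_ne_h
          · exact h1
        have hgx_ne_y : g x ≠ y := by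
          intro hc
          apply hh_not
          have : g y = h := by rw [hy_def, hy_inv]
          rw [← this, ← hc, hgx_inv]
          exact hx_t'
        exact ⟨(List.Nodup.mem_erase_iff hnd').mpr ⟨hgx_ne_y, hgx_t'⟩, hgx_ne, hgx_inv⟩
      obtain ⟨m, hcheck, hm⟩ :=
        ih (t'.erase y) ((h, y) :: acc) hlen' (hnd'.erase y) hOK' g hg'
      refine ⟨m, hcheck, fun x => ?_⟩
      rw [hm x]
      by_cases hx : x ∈ t'.erase y
      · have hx_t' : x ∈ t' := ((List.Nodup.mem_erase_iff hnd').mp hx).2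
        simp [hx, List.mem_cons_of_mem h hx_t']
      · by_cases hxh : x = h
        · subst hxh
          have : x ∉ t'.erase y := hx
          simp [hx, appM, List.mem_cons_self, hy_def]
        · by_cases hxy : x = y
          · have hgx : g x = h := by rw [hxy, hy_inv]
            have hx_mem : x ∈ h :: t' := by
              rw [hxy]; exact List.mem_cons_of_mem h hy_t'
            have happx : appM ((h, y) :: acc) x = h := by
              simp [appM, hxh, hxy]
            rw [if_neg hx, if_pos hx_mem, happx, hgx]
          · have hx_not : x ∉ h :: t' := by
              intro hc
              rcases List.mem_cons.mp hc with h1 | h1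
              · exact hxh h1
              · exact hx ((List.Nodup.mem_erase_iff hnd').mpr ⟨hxy, h1⟩)
            simp [hx, hx_not, appM, hxh, hxy]

/-! ### Canonical permutation with cycle type `{6,6}` -/

def A6 : List (Fin 12) := [0,1,2,3,4,5]
def B6 : List (Fin 12) := [6,7,8,9,10,11]

def c0 : Equiv.Perm (Fin 12) := A6.formPerm * B6.formPerm

theorem c0_cycleType : c0.cycleType = ({6, 6} : Multiset ℕ) := by
  have hA_nd : A6.Nodup := by decide
  have hB_nd : B6.Nodup := by decide
  have hA : A6.formPerm.IsCycle := List.isCycle_formPerm hA_nd (by decide)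
  have hB : B6.formPerm.IsCycle := List.isCycle_formPerm hB_nd (by decide)
  have hsA : A6.formPerm.support = A6.toFinset :=
    List.support_formPerm_of_nodup A6 hA_nd (by decide)
  have hsB : B6.formPerm.support = B6.toFinset :=
    List.support_formPerm_of_nodup B6 hB_nd (by decide)
  have hdisj : Equiv.Perm.Disjoint A6.formPerm B6.formPerm := by
    rw [Equiv.Perm.disjoint_iff_disjoint_support, hsA, hsB, Finset.disjoint_left]
    decide
  rw [c0, hdisj.cycleType_mul, hA.cycleType, hB.cycleType, hsA, hsB]
  decide

/-! ### Main theorem -/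

/-- The Laurent `(12,3)`-passport with `Π₁ = {2,2,2,2,2,2}`,
`Π₂ = {1,1,1,3,3,3}`, and `Π₃ = {6,6}` is not realizable. -/
theorem laurent_q3_not_realizable_twelve :
    ¬ Realizable3 12 ({2, 2, 2, 2, 2, 2} : Multiset ℕ)
        ({1, 1, 1, 3, 3, 3} : Multiset ℕ) ({6, 6} : Multiset ℕ) := by
  rintro ⟨σ1, σ2, σ3, h1, h2, h3, hprod, htrans⟩
  -- Step A: extract cycle types
  have hct1 : σ1.cycleType = ({2,2,2,2,2,2} : Multiset ℕ) := by
    have hk : 12 - σ1.cycleType.sum = 0 := by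
      by_contra hk
      have h1mem : (1 : ℕ) ∈ fullCycleType σ1 :=
        Multiset.mem_add.mpr (Or.inr (Multiset.mem_replicate.mpr ⟨hk, rfl⟩))
      rw [h1] at h1mem
      simp at h1mem
    have := h1
    rw [fullCycleType, hk] at this
    simpa using this
  have hct3 : σ3.cycleType = ({6,6} : Multiset ℕ) := by
    have hk : 12 - σ3.cycleType.sum = 0 := by
      by_contra hk
      have h1mem : (1 : ℕ) ∈ fullCycleType σ3 :=
        Multiset.mem_add.mpr (Or.inr (Multiset.mem_replicate.mpr ⟨hk, rfl⟩))
      rw [h3] at h1mem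
      simp at h1mem
    have := h3
    rw [fullCycleType, hk] at this
    simpa using this
  have hct2 : σ2.cycleType = ({3,3,3} : Multiset ℕ) := by
    have hfilt : σ2.cycleType = (fullCycleType σ2).filter (fun a => 2 ≤ a) := by
      rw [fullCycleType, Multiset.filter_add]
      rw [Multiset.filter_eq_self.mpr (fun a ha => Equiv.Perm.two_le_of_mem_cycleType ha)]
      rw [Multiset.filter_eq_nil.mpr]
      · rw [add_zero]
      · intro a ha
        rw [Multiset.eq_of_mem_replicate ha]
        omega
    rw [hfilt, h2]
    decide
  -- Step B: conjugate σ3 to c0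
  have hconj : IsConj σ3 c0 :=
    Equiv.Perm.isConj_iff_cycleType_eq.mpr (hct3.trans c0_cycleType.symm)
  obtain ⟨g, hc0⟩ := isConj_iff.mp hconj
  set τ : Equiv.Perm (Fin 12) := g * σ1 * g⁻¹ with hτ_def
  set ρ : Equiv.Perm (Fin 12) := g * σ2 * g⁻¹ with hρ_def
  have hctτ : τ.cycleType = ({2,2,2,2,2,2} : Multiset ℕ) := by
    rw [hτ_def, Equiv.Perm.cycleType_conj, hct1]
  have hctρ : ρ.cycleType = ({3,3,3} : Multiset ℕ) := by
    rw [hρ_def, Equiv.Perm.cycleType_conj, hct2]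
  have hprod' : τ * ρ * c0 = 1 := by
    rw [hτ_def, hρ_def, ← hc0]
    have : g * σ1 * g⁻¹ * (g * σ2 * g⁻¹) * (g * σ3 * g⁻¹)
        = g * (σ1 * σ2 * σ3) * g⁻¹ := by group
    rw [this, hprod]
    group
  -- order facts
  have hτ2 : τ * τ = 1 := by
    have horder : orderOf τ = 2 := by
      rw [← Equiv.Perm.lcm_cycleType, hctτ]; decide
    have := pow_orderOf_eq_one τ
    rwa [horder, pow_two] at this
  have hτapply : ∀ x, τ (τ x) = x := by
    intro x
    have : (τ * τ) x = (1 : Equiv.Perm (Fin 12)) x := by rw [hτ2]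
    simpa using this
  have hτ_fpf : ∀ x, τ x ≠ x := by
    have hsupp : τ.support = Finset.univ := by
      apply Finset.eq_univ_of_card
      have := Equiv.Perm.sum_cycleType τ
      rw [hctτ] at this
      simp at this ⊢
      omega
    intro x
    have : x ∈ τ.support := by rw [hsupp]; exact Finset.mem_univ x
    exact Equiv.Perm.mem_support.mp this
  have hρ_eq : ρ = τ * c0⁻¹ := by
    have hτ_inv : τ⁻¹ = τ := inv_eq_of_mul_eq_one_right hτ2
    have h1 : τ * (ρ * c0) = 1 := by rw [← mul_assoc]; exact hprod'
    have h2 : τ⁻¹ = ρ * c0 := by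
      rw [hτ_inv]
      have := inv_eq_of_mul_eq_one_right h1
      rw [← this]
      exact hτ_inv.symm
    have : ρ = τ⁻¹ * c0⁻¹ := by rw [h2, mul_assoc, mul_inv_cancel, mul_one]
    rw [this, hτ_inv]
  have hρ3 : ∀ x, ρ (ρ (ρ x)) = x := by
    have horder : orderOf ρ = 3 := by
      rw [← Equiv.Perm.lcm_cycleType, hctρ]; decide
    have h3 : ρ ^ 3 = 1 := by rw [← horder]; exact pow_orderOf_eq_one ρ
    intro x
    have : (ρ ^ 3) x = (1 : Equiv.Perm (Fin 12)) x := by rw [h3]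
    rw [pow_succ, pow_succ, pow_one] at this
    simpa using this
  have hρ_fix : ∃ x, ρ x = x := by
    by_contra hno
    push_neg at hno
    have hsupp : ρ.support = Finset.univ :=
      Finset.eq_univ_of_forall (fun x => Equiv.Perm.mem_support.mpr (hno x))
    have := Equiv.Perm.sum_cycleType ρ
    rw [hctρ, hsupp] at this
    simp at this
  -- Step C: crossing
  have hPres_c0 : ∀ x : Fin 12, (c0 x).val < 6 ↔ x.val < 6 := by decide
  have hcross : ∃ x : Fin 12, x.val < 6 ∧ 6 ≤ (τ x).val := by
    by_contra hno
    push_neg at hno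
    have hPresτ : ∀ x : Fin 12, (τ x).val < 6 ↔ x.val < 6 := by
      intro x
      constructor
      · intro hτx
        by_contra hx
        -- x.val ≥ 6, τ x < 6 : apply hno to τ x
        have h1 : (τ x).val < 6 := hτx
        have h2 := hno (τ x) h1
        rw [hτapply x] at h2
        omega
      · intro hx
        by_contra hτx
        exact absurd (hno x hx) (by omega)
    -- all elements of the closure preserve the block
    have hPresρ : ∀ x : Fin 12, (ρ x).val < 6 ↔ x.val < 6 := by
      intro x
      rw [hρ_eq]
      have h1 : ∀ y : Fin 12, (c0⁻¹ y).val < 6 ↔ y.val < 6 := by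
        intro y
        have := hPres_c0 (c0⁻¹ y)
        simpa using this.symm
      simp only [Equiv.Perm.mul_apply]
      rw [hPresτ, h1]
    obtain ⟨h0, hmem, happ⟩ := htrans (g⁻¹ ⟨0, by norm_num⟩) (g⁻¹ ⟨6, by norm_num⟩)
    set hh : Equiv.Perm (Fin 12) := g * h0 * g⁻¹ with hh_def
    have hh_mem : hh ∈ Subgroup.closure ({τ, ρ, c0} : Set (Equiv.Perm (Fin 12))) := by
      rw [hh_def]
      refine Subgroup.closure_induction
        (p := fun z _ => g * z * g⁻¹ ∈ Subgroup.closure ({τ, ρ, c0} : Set (Equiv.Perm (Fin 12))))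
        ?_ ?_ ?_ ?_ hmem
      · intro z hz
        rcases hz with hz | hz | hz
        · subst hz; exact Subgroup.subset_closure (by simp [hτ_def])
        · subst hz; exact Subgroup.subset_closure (by simp [hρ_def])
        · simp only [Set.mem_singleton_iff] at hz
          subst hz
          rw [hc0]
          exact Subgroup.subset_closure (by simp)
      · simpa using Subgroup.one_mem _
      · intro a b _ _ ha hb
        have : g * (a * b) * g⁻¹ = (g * a * g⁻¹) * (g * b * g⁻¹) := by group
        rw [this]
        exact Subgroup.mul_mem _ ha hb
      · intro a _ ha
        have : g * a⁻¹ * g⁻¹ = (g * a * g⁻¹)⁻¹ := by group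
        rw [this]
        exact Subgroup.inv_mem _ ha
    have hPres_hh : ∀ x : Fin 12, (hh x).val < 6 ↔ x.val < 6 := by
      refine Subgroup.closure_induction
        (p := fun z _ => ∀ x : Fin 12, (z x).val < 6 ↔ x.val < 6)
        ?_ ?_ ?_ ?_ hh_mem
      · intro z hz
        rcases hz with hz | hz | hz
        · subst hz; exact hPresτ
        · subst hz; exact hPresρ
        · simp only [Set.mem_singleton_iff] at hz; subst hz; exact hPres_c0
      · intro x; simp
      · intro a b _ _ ha hb x
        simp only [Equiv.Perm.mul_apply]
        rw [ha, hb]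
      · intro a _ ha x
        have := ha (a⁻¹ x)
        simpa using this.symm
    have happ' : hh ⟨0, by norm_num⟩ = ⟨6, by norm_num⟩ := by
      rw [hh_def]
      simp only [Equiv.Perm.mul_apply]
      rw [happ]
      simp
    have := hPres_hh ⟨0, by norm_num⟩
    rw [happ'] at this
    simp at this
  -- Step D: bridge to the computational check
  set F : Nat → Nat := fun i => if h : i < 12 then (τ ⟨i, h⟩).val else 0 with hF_def
  have hF : ∀ i (h : i < 12), F i = (τ ⟨i, h⟩).val := by
    intro i h
    simp [hF_def, h]
  have hgF : ∀ x ∈ l12, F x ∈ l12 ∧ F x ≠ x ∧ F (F x) = x := by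
    have hmem12 : ∀ i : Nat, i < 12 → i ∈ l12 := by
      intro i hi
      simp only [l12, List.mem_cons, List.mem_singleton]
      omega
    have hx12 : ∀ x ∈ l12, x < 12 := by decide
    intro x hx
    have hxlt : x < 12 := hx12 x hx
    refine ⟨hmem12 _ (by rw [hF _ hxlt]; exact (τ ⟨x, hxlt⟩).isLt), ?_, ?_⟩
    · rw [hF _ hxlt]
      intro hc
      exact hτ_fpf ⟨x, hxlt⟩ (Fin.ext hc)
    · have hFlt : F x < 12 := by rw [hF _ hxlt]; exact (τ ⟨x, hxlt⟩).isLt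
      rw [hF _ hxlt] at hFlt ⊢
      rw [hF _ hFlt]
      have : (⟨(τ ⟨x, hxlt⟩).val, hFlt⟩ : Fin 12) = τ ⟨x, hxlt⟩ := rfl
      rw [this, hτapply]
  obtain ⟨m, hcheck, hm⟩ := allOK_sound 12 l12 [] (by decide) (by decide) key F hgF
  have happm : ∀ i : Nat, i < 12 → appM m i = F i := by
    intro i hi
    have : i ∈ l12 := by
      simp only [l12, List.mem_cons, List.mem_singleton]
      omega
    rw [hm i, if_pos this]
  -- cInvN agrees with c0⁻¹
  have hcInv : ∀ x : Fin 12, cInvN x.val = (c0⁻¹ x).val := by decide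
  have hrho : ∀ (x : Fin 12), rhoM m x.val = (ρ x).val := by
    intro x
    have h1 : cInvN x.val = (c0⁻¹ x).val := hcInv x
    have h2 : cInvN x.val < 12 := by rw [h1]; exact (c0⁻¹ x).isLt
    rw [rhoM, happm _ h2, hF _ h2]
    have : (⟨cInvN x.val, h2⟩ : Fin 12) = c0⁻¹ x := Fin.ext h1
    rw [this, hρ_eq]
    rfl
  -- contradiction with checkB
  have hX : (l12.any fun i => decide (i < 6) && decide (6 ≤ appM m i)) = true := by
    obtain ⟨x, hx6, hτx6⟩ := hcross
    rw [List.any_eq_true]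
    refine ⟨x.val, ?_, ?_⟩
    · simp only [l12, List.mem_cons, List.mem_singleton]; omega
    · rw [happm _ x.isLt, hF _ x.isLt]
      simp only [Fin.eta]
      simp [hx6, hτx6]
  have hY : (l12.all fun i => rhoM m (rhoM m (rhoM m i)) == i) = true := by
    rw [List.all_eq_true]
    intro i hi
    have hx12 : ∀ x ∈ l12, x < 12 := by decide
    have hilt : i < 12 := hx12 i hi
    have e1 : rhoM m i = (ρ ⟨i, hilt⟩).val := hrho ⟨i, hilt⟩
    rw [e1, hrho, hrho, hρ3]
    simp
  have hZ : (l12.any fun i => rhoM m i == i) = true := by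
    obtain ⟨x, hx⟩ := hρ_fix
    rw [List.any_eq_true]
    refine ⟨x.val, ?_, ?_⟩
    · simp only [l12, List.mem_cons, List.mem_singleton]
      have := x.isLt; omega
    · rw [hrho x, hx]
      simp
  rw [checkB, hX, hY, hZ] at hcheck
  simp at hcheck
end
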